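/- arXiv:1503.01801 — 4 statements merged into one kernel-verified Lean document; each statement's English description precedes it below -/
import Mathlib

section
/- Let G = (ℝⁿ,·) be a Lie group whose underlying manifold is ℝⁿ and let Ȟ be the measure with density y ↦ (det D(ρ_y)(e))⁻¹ with respect to Lebesgue measure. Assume L is left-invariant on G, its associated vector fields X₀, X₁, …, Xₙ satisfy Hörmander's rank condition, and the representation hypothesis together with positivity detection for ν holds. If u ∈ C∞(ℝⁿ,ℝ) satisfies Lu = 0 on ℝⁿ, u ≥ 0, and ∫_{ℝⁿ} u(x)^p dȞ(x) < ∞ for some p ∈ (0,1), then u ≡ 0 on ℝⁿ. -/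
open MeasureTheory

/-- Partial derivative `∂u/∂x_i` on `ℝⁿ = Fin n → ℝ`. -/
noncomputable def pderiv' (n : ℕ) (i : Fin n) (u : (Fin n → ℝ) → ℝ) (x : Fin n → ℝ) : ℝ :=
  fderiv ℝ u x (Pi.single i 1)

/-- The second order operator
`L u = Σ a_{ij} ∂²u/∂x_i∂x_j + Σ b_j ∂u/∂x_j`. -/
noncomputable def Lop (n : ℕ) (a : Fin n → Fin n → (Fin n → ℝ) → ℝ)
    (b : Fin n → (Fin n → ℝ) → ℝ) (u : (Fin n → ℝ) → ℝ) (x : Fin n → ℝ) : ℝ :=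
  (∑ i, ∑ j, a i j x * pderiv' n i (pderiv' n j u) x) + ∑ j, b j x * pderiv' n j u x

/-- The vector field `X_i = Σ_j a_{ij}(x) ∂/∂x_j`, viewed as a map `ℝⁿ → ℝⁿ`. -/
def Xvec (n : ℕ) (a : Fin n → Fin n → (Fin n → ℝ) → ℝ) (i : Fin n) :
    (Fin n → ℝ) → (Fin n → ℝ) :=
  fun x => fun j => a i j x

/-- The drift vector field `X₀ = Σ_j (b_j - Σ_i ∂a_{ij}/∂x_i) ∂/∂x_j`. -/
noncomputable def Xzero (n : ℕ) (a : Fin n → Fin n → (Fin n → ℝ) → ℝ)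
    (b : Fin n → (Fin n → ℝ) → ℝ) : (Fin n → ℝ) → (Fin n → ℝ) :=
  fun x => fun j => b j x - ∑ i, pderiv' n i (fun y => a i j y) x

/-- The smallest family of vector fields containing `S` and closed under Lie bracket. -/
inductive LieGen (n : ℕ) (S : Set ((Fin n → ℝ) → (Fin n → ℝ))) :
    ((Fin n → ℝ) → (Fin n → ℝ)) → Prop
  | base (X : (Fin n → ℝ) → (Fin n → ℝ)) : X ∈ S → LieGen n S X
  | bracket (X Y : (Fin n → ℝ) → (Fin n → ℝ)) : LieGen n S X → LieGen n S Y →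
      LieGen n S (fun x => fderiv ℝ Y x (X x) - fderiv ℝ X x (Y x))

/-- Hörmander's rank condition: the iterated Lie brackets of the fields in `S`
span `ℝⁿ` at every point. -/
def Hormander (n : ℕ) (S : Set ((Fin n → ℝ) → (Fin n → ℝ))) : Prop :=
  ∀ x : Fin n → ℝ, Submodule.span ℝ {v : Fin n → ℝ | ∃ X, LieGen n S X ∧ v = X x} = ⊤

/-- The right-invariant measure `Ȟ`, with density `y ↦ (det D(ρ_y)(e))⁻¹`
with respect to Lebesgue measure. -/
noncomputable def Hcheck (n : ℕ) (mul : (Fin n → ℝ) → (Fin n → ℝ) → (Fin n → ℝ))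
    (e : Fin n → ℝ) : Measure (Fin n → ℝ) :=
  volume.withDensity fun y =>
    ENNReal.ofReal ((fderiv ℝ (fun z => mul z y) e).det)⁻¹


open MeasureTheory Set

lemma integrable_of_null_compl {α : Type*} [MeasurableSpace α] [TopologicalSpace α]
    [OpensMeasurableSpace α] [T2Space α] {m : Measure α} [IsFiniteMeasure m] {K : Set α}
    (hK : IsCompact K) (hm : m Kᶜ = 0) {f : α → ℝ} (hf : Continuous f) : Integrable f m := by
  have h1 : IntegrableOn f K m := hf.continuousOn.integrableOn_compact hK
  have h2 : Integrable (K.indicator f) m := (integrable_indicator_iff hK.measurableSet).2 h1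
  refine h2.congr ?_
  have hae : ∀ᵐ x ∂m, x ∈ K := by
    rw [ae_iff]
    exact hm
  filter_upwards [hae] with x hx
  exact Set.indicator_of_mem hx f

lemma cont_integral_mul {n : ℕ} {mul : (Fin n → ℝ) → (Fin n → ℝ) → (Fin n → ℝ)}
    (hmul : Continuous fun p : (Fin n → ℝ) × (Fin n → ℝ) => mul p.1 p.2)
    {m : Measure (Fin n → ℝ)} [IsFiniteMeasure m] {K : Set (Fin n → ℝ)}
    (hK : IsCompact K) (hm : m Kᶜ = 0) {F : (Fin n → ℝ) → ℝ} (hF : Continuous F) :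
    Continuous fun x => ∫ y, F (mul x y) ∂m := by
  rw [continuous_iff_continuousAt]
  intro x₀
  have hae : ∀ᵐ y ∂m, y ∈ K := by rw [ae_iff]; exact hm
  obtain ⟨C, hC⟩ := ((isCompact_closedBall x₀ 1).prod hK).exists_bound_of_continuousOn
    ((hF.comp hmul).continuousOn)
  apply continuousAt_of_dominated (bound := K.indicator fun _ => C)
  · exact Filter.Eventually.of_forall fun x =>
      (hF.comp (hmul.comp (continuous_const.prodMk continuous_id))).aestronglyMeasurable
  · have hball : ∀ᶠ x in nhds x₀, x ∈ Metric.closedBall x₀ 1 :=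
      Metric.closedBall_mem_nhds x₀ one_pos
    filter_upwards [hball] with x hx
    filter_upwards [hae] with y hy
    rw [Set.indicator_of_mem hy]
    exact hC (x, y) ⟨hx, hy⟩
  · rw [integrable_indicator_iff hK.measurableSet]
    exact integrableOn_const (measure_lt_top m K).ne enorm_ne_top
  · exact Filter.Eventually.of_forall fun y =>
      (hF.comp (hmul.comp (continuous_id.prodMk continuous_const))).continuousAt

lemma real_rpow_add_one_le {a p : ℝ} (ha : 0 ≤ a) (hp : 0 ≤ p) (hp1 : p ≤ 1) :
    (a + 1) ^ p ≤ a ^ p + 1 := by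
  have h := NNReal.rpow_add_le_add_rpow a.toNNReal 1 hp hp1
  have h2 : (((a.toNNReal + 1 : NNReal) : ℝ)) ^ p ≤ ((a.toNNReal ^ p + 1 ^ p : NNReal) : ℝ) := by
    rw [← NNReal.coe_rpow]
    exact_mod_cast NNReal.coe_le_coe.2 h
  push_cast at h2
  rw [Real.coe_toNNReal a ha] at h2
  simpa using h2

open MeasureTheory Set

lemma quad_zero {n : ℕ} (A : Fin n → Fin n → ℝ) (hsym : ∀ i j, A i j = A j i)
    (hpsd : ∀ ξ : Fin n → ℝ, 0 ≤ ∑ i, ∑ j, A i j * ξ i * ξ j) (q : Fin n → ℝ)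
    (hq : ∑ i, ∑ j, A i j * q i * q j = 0) (k : Fin n) : ∑ j, A k j * q j = 0 := by
  have key : ∀ t : ℝ, 0 ≤ A k k * (t * t) + (2 * ∑ j, A k j * q j) * t + 0 := by
    intro t
    have h0 := hpsd (fun i => q i + t * (if i = k then 1 else 0))
    set ξ : Fin n → ℝ := fun i => q i + t * (if i = k then 1 else 0) with hξ
    have e1 : ∀ i, ∑ j, A i j * ξ i * ξ j = ξ i * ((∑ j, A i j * q j) + t * A i k) := by
      intro i
      have h1 : ∀ j, A i j * ξ i * ξ j
          = ξ i * (A i j * q j) + ξ i * t * (if j = k then A i j else 0) := by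
        intro j
        by_cases h : j = k <;> simp [hξ, h] <;> ring
      rw [Finset.sum_congr rfl fun j _ => h1 j, Finset.sum_add_distrib, ← Finset.mul_sum]
      have h2 : ∑ j, ξ i * t * (if j = k then A i j else 0) = ξ i * t * A i k := by
        rw [← Finset.mul_sum, Finset.sum_ite_eq' Finset.univ k fun j => A i j]
        simp
      rw [h2]; ring
    have e2 : ∑ i, ∑ j, A i j * ξ i * ξ j
        = (∑ i, q i * ((∑ j, A i j * q j) + t * A i k))
          + t * ((∑ j, A k j * q j) + t * A k k) := by
      rw [Finset.sum_congr rfl fun i _ => e1 i]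
      have h3 : ∀ i, ξ i * ((∑ j, A i j * q j) + t * A i k)
          = q i * ((∑ j, A i j * q j) + t * A i k)
            + t * (if i = k then ((∑ j, A i j * q j) + t * A i k) else 0) := by
        intro i
        by_cases h : i = k <;> simp [hξ, h] <;> ring
      rw [Finset.sum_congr rfl fun i _ => h3 i, Finset.sum_add_distrib,
        ← Finset.mul_sum, Finset.sum_ite_eq' Finset.univ k
          (fun i => (∑ j, A i j * q j) + t * A i k)]
      simp
    have e3 : ∑ i, q i * ((∑ j, A i j * q j) + t * A i k)
        = (∑ i, ∑ j, A i j * q i * q j) + t * ∑ j, A k j * q j := by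
      rw [Finset.sum_congr rfl (fun i _ => mul_add (q i) _ _), Finset.sum_add_distrib]
      congr 1
      · exact Finset.sum_congr rfl fun i _ => by
          rw [Finset.mul_sum]; exact Finset.sum_congr rfl fun j _ => by ring
      · rw [Finset.mul_sum]
        exact Finset.sum_congr rfl fun i _ => by rw [hsym k i]; ring
    rw [e2, e3, hq] at h0
    nlinarith [h0]
  have hd := discrim_le_zero key
  have he : discrim (A k k) (2 * ∑ j, A k j * q j) 0 = 4 * (∑ j, A k j * q j) ^ 2 := by
    rw [discrim]; ring
  rw [he] at hd
  nlinarith [sq_nonneg (∑ j, A k j * q j)]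

lemma hasFDerivAt_rpow_shift {n : ℕ} {u : (Fin n → ℝ) → ℝ} (hu : Differentiable ℝ u)
    (hpos : ∀ x, 0 ≤ u x) (r : ℝ) (y : Fin n → ℝ) :
    HasFDerivAt (fun z => (u z + 1) ^ r)
      ((r * (u y + 1) ^ (r - 1)) • fderiv ℝ u y) y := by
  have h1 : HasDerivAt (fun t : ℝ => t ^ r) (r * (u y + 1) ^ (r - 1)) (u y + 1) :=
    Real.hasDerivAt_rpow_const (Or.inl (by have := hpos y; intro h; nlinarith))
  have h2 : HasFDerivAt (fun z => u z + 1) (fderiv ℝ u y) y :=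
    (hu y).hasFDerivAt.add_const 1
  exact h1.comp_hasFDerivAt y h2

lemma pderiv_rpow_shift {n : ℕ} {u : (Fin n → ℝ) → ℝ} (hu : Differentiable ℝ u)
    (hpos : ∀ x, 0 ≤ u x) (r : ℝ) (j : Fin n) (y : Fin n → ℝ) :
    pderiv' n j (fun z => (u z + 1) ^ r - 1) y
      = r * (u y + 1) ^ (r - 1) * pderiv' n j u y := by
  have h := (hasFDerivAt_rpow_shift hu hpos r y).sub_const 1
  rw [pderiv', h.fderiv]
  simp [pderiv']

lemma contDiff_q {n : ℕ} {u : (Fin n → ℝ) → ℝ} (hu : ContDiff ℝ (⊤ : ℕ∞) u) (j : Fin n) :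
    ContDiff ℝ (⊤ : ℕ∞) (pderiv' n j u) := by
  have h : ContDiff ℝ (⊤ : ℕ∞) (fderiv ℝ u) := hu.fderiv_right (by simp)
  exact h.clm_apply contDiff_const

lemma Lop_rpow_shift {n : ℕ} (a : Fin n → Fin n → (Fin n → ℝ) → ℝ)
    (b : Fin n → (Fin n → ℝ) → ℝ) {u : (Fin n → ℝ) → ℝ} (hu : ContDiff ℝ (⊤ : ℕ∞) u)
    (hpos : ∀ x, 0 ≤ u x) (p : ℝ) (x : Fin n → ℝ) :
    Lop n a b (fun z => (u z + 1) ^ p - 1) x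
      = p * (p - 1) * (u x + 1) ^ (p - 2)
          * (∑ i, ∑ j, a i j x * pderiv' n i u x * pderiv' n j u x)
        + p * (u x + 1) ^ (p - 1) * Lop n a b u x := by
  have hud : Differentiable ℝ u := hu.differentiable (by simp)
  have hfun : ∀ j, pderiv' n j (fun z => (u z + 1) ^ p - 1)
      = fun y => p * (u y + 1) ^ (p - 1) * pderiv' n j u y :=
    fun j => funext fun y => pderiv_rpow_shift hud hpos p j y
  -- second derivative
  have h2 : ∀ i j, pderiv' n i (pderiv' n j (fun z => (u z + 1) ^ p - 1)) x
      = p * (p - 1) * (u x + 1) ^ (p - 2) * pderiv' n i u x * pderiv' n j u x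
        + p * (u x + 1) ^ (p - 1) * pderiv' n i (pderiv' n j u) x := by
    intro i j
    rw [hfun j]
    have hA : HasFDerivAt (fun y => p * (u y + 1) ^ (p - 1))
        (((p - 1) * (u x + 1) ^ (p - 1 - 1)) • (p • fderiv ℝ u x)) x := by
      have := (hasFDerivAt_rpow_shift hud hpos (p - 1) x).const_mul p
      refine this.congr_fderiv ?_
      ext w
      simp
      ring
    have hB : HasFDerivAt (pderiv' n j u) (fderiv ℝ (pderiv' n j u) x) x :=
      ((contDiff_q hu j).differentiable (by simp) x).hasFDerivAt
    have hAB : HasFDerivAt (fun y => p * (u y + 1) ^ (p - 1) * pderiv' n j u y) _ x := hA.mul hB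
    rw [pderiv', hAB.fderiv]
    simp only [ContinuousLinearMap.add_apply, ContinuousLinearMap.smul_apply,
      smul_eq_mul]
    have hp2 : p - 1 - 1 = p - 2 := by ring
    rw [hp2]
    unfold pderiv'
    ring
  have h1 : ∀ j, pderiv' n j (fun z => (u z + 1) ^ p - 1) x
      = p * (u x + 1) ^ (p - 1) * pderiv' n j u x :=
    fun j => pderiv_rpow_shift hud hpos p j x
  unfold Lop
  set P := p * (p - 1) * (u x + 1) ^ (p - 2) with hP
  set Q := p * (u x + 1) ^ (p - 1) with hQ
  have hsum1 : ∑ i, ∑ j, a i j x * pderiv' n i (pderiv' n j fun z => (u z + 1) ^ p - 1) x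
      = P * (∑ i, ∑ j, a i j x * pderiv' n i u x * pderiv' n j u x)
        + Q * ∑ i, ∑ j, a i j x * pderiv' n i (pderiv' n j u) x := by
    rw [Finset.sum_congr rfl fun i _ => Finset.sum_congr rfl fun j _ => by rw [h2 i j]]
    calc ∑ i, ∑ j, a i j x * (P * pderiv' n i u x * pderiv' n j u x
            + Q * pderiv' n i (pderiv' n j u) x)
        = ∑ i, ∑ j, (P * (a i j x * pderiv' n i u x * pderiv' n j u x)
            + Q * (a i j x * pderiv' n i (pderiv' n j u) x)) :=
          Finset.sum_congr rfl fun i _ => Finset.sum_congr rfl fun j _ => by ring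
      _ = _ := by simp only [Finset.sum_add_distrib, Finset.mul_sum]
  have hsum2 : ∑ j, b j x * pderiv' n j (fun z => (u z + 1) ^ p - 1) x
      = Q * ∑ j, b j x * pderiv' n j u x := by
    rw [Finset.sum_congr rfl fun j _ => by rw [h1 j]]
    calc ∑ j, b j x * (Q * pderiv' n j u x)
        = ∑ j, Q * (b j x * pderiv' n j u x) :=
          Finset.sum_congr rfl fun j _ => by ring
      _ = _ := by rw [Finset.mul_sum]
  rw [hsum1, hsum2]
  ring

set_option maxHeartbeats 4000000 in
/-- Weighted `L^p`-Liouville theorem for nonnegative `L`-harmonic functions, `p ∈ (0,1)`. -/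
theorem weighted_Lp_liouville_harmonic_nonneg
    {n : ℕ} (hn : 0 < n)
    -- the coefficients of L
    (a : Fin n → Fin n → (Fin n → ℝ) → ℝ) (b : Fin n → (Fin n → ℝ) → ℝ)
    (ha : ∀ i j, ContDiff ℝ (⊤ : ℕ∞) (a i j)) (hb : ∀ j, ContDiff ℝ (⊤ : ℕ∞) (b j))
    (hsym : ∀ i j x, a i j x = a j i x)
    (hpsd : ∀ (x ξ : Fin n → ℝ), 0 ≤ ∑ i, ∑ j, a i j x * ξ i * ξ j)
    -- the Lie group structure G = (ℝⁿ, ·)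
    (mul : (Fin n → ℝ) → (Fin n → ℝ) → (Fin n → ℝ))
    (inv : (Fin n → ℝ) → (Fin n → ℝ)) (e : Fin n → ℝ)
    (hassoc : ∀ x y z, mul (mul x y) z = mul x (mul y z))
    (hidl : ∀ x, mul e x = x) (hidr : ∀ x, mul x e = x)
    (hinvl : ∀ x, mul (inv x) x = e) (hinvr : ∀ x, mul x (inv x) = e)
    (hmul_smooth : ContDiff ℝ (⊤ : ℕ∞) fun p : (Fin n → ℝ) × (Fin n → ℝ) => mul p.1 p.2)
    (hinv_smooth : ContDiff ℝ (⊤ : ℕ∞) inv)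
    -- L is left invariant on G
    (hLI : ∀ (u : (Fin n → ℝ) → ℝ), ContDiff ℝ (⊤ : ℕ∞) u → ∀ x y,
      Lop n a b (fun z => u (mul x z)) y = Lop n a b u (mul x y))
    -- Hörmander's rank condition for X₀, X₁, …, Xₙ
    (hHor : Hormander n (insert (Xzero n a b) (Set.range (Xvec n a))))
    -- the representation hypothesis
    (Ω : Set (Fin n → ℝ)) (hΩo : IsOpen Ω) (hΩb : Bornology.IsBounded Ω)
    (μ ν : Measure (Fin n → ℝ))
    (hμ : IsProbabilityMeasure μ) (hν : IsFiniteMeasure ν)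
    (hμsupp : μ (frontier Ω)ᶜ = 0) (hνsupp : ν (closure Ω)ᶜ = 0)
    (hrep : ∀ v : (Fin n → ℝ) → ℝ, ContDiff ℝ 2 v → ∀ x,
      v x = (∫ y, v (mul x y) ∂μ) - ∫ y, Lop n a b v (mul x y) ∂ν)
    -- positivity detection for ν
    (hposdet : ∀ w : (Fin n → ℝ) → ℝ, Continuous w → (∀ x, 0 ≤ w x) →
      (∀ x, (∫ y, w (mul x y) ∂ν) = 0) → ∀ x, w x = 0)
    -- the function u
    (u : (Fin n → ℝ) → ℝ) (hu : ContDiff ℝ (⊤ : ℕ∞) u)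
    (hharm : ∀ x, Lop n a b u x = 0)
    (hpos : ∀ x, 0 ≤ u x)
    (p : ℝ) (hp0 : 0 < p) (hp1 : p < 1)
    (hup : (∫⁻ x, ENNReal.ofReal (u x ^ p) ∂(Hcheck n mul e)) < ⊤) :
    ∀ x, u x = 0 := by
  have hρs : ∀ y : Fin n → ℝ, ContDiff ℝ (⊤ : ℕ∞) fun x => mul x y := fun y =>
    hmul_smooth.comp (contDiff_id.prodMk contDiff_const)
  have hρd : ∀ (y x : Fin n → ℝ), DifferentiableAt ℝ (fun z => mul z y) x := fun y x =>
    ((hρs y).differentiable (by simp)).differentiableAt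
  set Δ : (Fin n → ℝ) → ℝ := fun x => (fderiv ℝ (fun z => mul z x) e).det with hΔdef
  -- continuity of Δ
  have hΔc : Continuous Δ := by
    have hM : Continuous (fderiv ℝ fun p : (Fin n → ℝ) × (Fin n → ℝ) => mul p.1 p.2) :=
      (hmul_smooth.fderiv_right (m := (⊤ : ℕ∞)) (by simp)).continuous
    have key : ∀ x : Fin n → ℝ, fderiv ℝ (fun z => mul z x) e
        = ((fderiv ℝ (fun p : (Fin n → ℝ) × (Fin n → ℝ) => mul p.1 p.2) (e, x)).comp
            (ContinuousLinearMap.inl ℝ (Fin n → ℝ) (Fin n → ℝ))) := by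
      intro x
      have h1 : HasFDerivAt (fun z : Fin n → ℝ => (z, x)) (ContinuousLinearMap.inl ℝ (Fin n → ℝ) (Fin n → ℝ)) e :=
        (hasFDerivAt_id e).prodMk (hasFDerivAt_const x e)
      have h2 : HasFDerivAt (fun p : (Fin n → ℝ) × (Fin n → ℝ) => mul p.1 p.2)
          (fderiv ℝ (fun p : (Fin n → ℝ) × (Fin n → ℝ) => mul p.1 p.2) (e, x)) (e, x) :=
        (hmul_smooth.differentiable (by simp) (e, x)).hasFDerivAt
      exact (h2.comp e h1).fderiv
    have : Δ = fun x => ((fderiv ℝ (fun p : (Fin n → ℝ) × (Fin n → ℝ) => mul p.1 p.2) (e, x)).comp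
        (ContinuousLinearMap.inl ℝ (Fin n → ℝ) (Fin n → ℝ))).det := by
      funext x; exact congrArg ContinuousLinearMap.det (key x)
    rw [this]
    exact ContinuousLinearMap.continuous_det.comp
      ((hM.comp (continuous_const.prodMk continuous_id)).clm_comp continuous_const)
  -- chain rule for ρ
  have hchain : ∀ x y : Fin n → ℝ, Δ (mul x y) = (fderiv ℝ (fun z => mul z y) x).det * Δ x := by
    intro x y
    have hcomp : (fun z => mul z (mul x y)) = (fun z => mul z y) ∘ (fun z => mul z x) := by
      funext z; exact (hassoc z x y).symm
    have hfd : fderiv ℝ (fun z => mul z (mul x y)) e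
        = (fderiv ℝ (fun z => mul z y) x).comp (fderiv ℝ (fun z => mul z x) e) := by
      rw [hcomp]
      have := fderiv_comp e (hρd y (mul e x)) (hρd x e)
      rwa [hidl x] at this
    rw [hΔdef]
    simp only
    rw [hfd, ContinuousLinearMap.det, ContinuousLinearMap.toLinearMap_comp, LinearMap.det_comp]
  -- Δ is nonvanishing
  have hΔne : ∀ x : Fin n → ℝ, Δ x ≠ 0 := by
    intro x
    have h1 : Δ (mul x (inv x)) = (fderiv ℝ (fun z => mul z (inv x)) x).det * Δ x :=
      hchain x (inv x)
    rw [hinvr x] at h1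
    have h2 : Δ e = 1 := by
      have hid : (fun z => mul z e) = fun z => z := funext fun z => hidr z
      rw [hΔdef]
      simp only [hid, fderiv_id']
      simp [ContinuousLinearMap.det]
    rw [h2] at h1
    intro h
    rw [h, mul_zero] at h1
    exact one_ne_zero h1
  have hΔ1 : Δ e = 1 := by
    have hid : (fun z => mul z e) = fun z => z := funext fun z => hidr z
    rw [hΔdef]; simp only [hid, fderiv_id']; simp [ContinuousLinearMap.det]
  -- Δ is positive
  have hΔpos : ∀ x : Fin n → ℝ, 0 < Δ x := by
    intro x
    by_contra hx
    push_neg at hx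
    have hlt : Δ x < 0 := lt_of_le_of_ne hx (hΔne x)
    have hconn : IsPreconnected (Δ '' univ) :=
      (isPreconnected_univ).image Δ hΔc.continuousOn
    have h0 : (0 : ℝ) ∈ Δ '' univ := by
      have := hconn.ordConnected.out (mem_image_of_mem Δ (mem_univ x))
        (mem_image_of_mem Δ (mem_univ e))
      refine this ?_
      rw [hΔ1]
      exact ⟨hlt.le, zero_le_one⟩
    obtain ⟨z, -, hz⟩ := h0
    exact hΔne z hz
  -- positivity of jacobian
  have hJpos : ∀ x y : Fin n → ℝ, 0 < (fderiv ℝ (fun z => mul z y) x).det := by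
    intro x y
    have h := hchain x y
    have h2 : (fderiv ℝ (fun z => mul z y) x).det = Δ (mul x y) / Δ x := by
      field_simp [hΔne x] at h ⊢
      linarith [h]
    rw [h2]
    exact div_pos (hΔpos _) (hΔpos _)
  -- change of variables
  have hCV : ∀ (y : Fin n → ℝ) (g : (Fin n → ℝ) → ENNReal), Measurable g →
      ∫⁻ z, g z = ∫⁻ x, ENNReal.ofReal |(fderiv ℝ (fun z => mul z y) x).det|
        * g (mul x y) := by
    intro y g hg
    have hinj : Set.InjOn (fun x => mul x y) Set.univ := by
      intro x1 _ x2 _ h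
      have h2 : mul (mul x1 y) (inv y) = mul (mul x2 y) (inv y) := by
        simp only at h
        rw [h]
      rwa [hassoc, hassoc, hinvr, hidr, hidr] at h2
    have hder : ∀ x ∈ Set.univ, HasFDerivWithinAt (fun z => mul z y)
        (fderiv ℝ (fun z => mul z y) x) Set.univ x := fun x _ =>
      ((hρd y x).hasFDerivAt).hasFDerivWithinAt
    have hsurj : (fun x => mul x y) '' Set.univ = Set.univ := by
      apply Set.eq_univ_of_forall
      intro z
      refine ⟨mul z (inv y), Set.mem_univ _, ?_⟩
      simp only
      rw [hassoc, hinvl, hidr]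
    have hkey := lintegral_image_eq_lintegral_abs_det_fderiv_mul volume
      MeasurableSet.univ hder hinj g
    rw [hsurj] at hkey
    simpa [Measure.restrict_univ] using hkey
  -- the measure and right invariance
  set δ : (Fin n → ℝ) → ENNReal := fun x => ENNReal.ofReal (Δ x)⁻¹ with hδdef
  have hδm : Measurable δ := by
    exact (ENNReal.measurable_ofReal.comp (hΔc.measurable.inv))
  have hRI : ∀ (y : Fin n → ℝ) (f : (Fin n → ℝ) → ENNReal), Measurable f →
      ∫⁻ x, f (mul x y) ∂(volume.withDensity δ) = ∫⁻ x, f x ∂(volume.withDensity δ) := by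
    intro y f hf
    have hg1 : Measurable fun x => f (mul x y) :=
      hf.comp ((hρs y).continuous.measurable)
    rw [lintegral_withDensity_eq_lintegral_mul volume hδm hg1,
      lintegral_withDensity_eq_lintegral_mul volume hδm hf]
    have hmeas : Measurable fun z => δ z * f z := hδm.mul hf
    simp only [Pi.mul_apply]
    rw [hCV y (fun z => δ z * f z) hmeas]
    apply lintegral_congr
    intro x
    rw [← mul_assoc]
    congr 1
    rw [hδdef]
    simp only
    rw [abs_of_pos (hJpos x y), ← ENNReal.ofReal_mul (hJpos x y).le]
    congr 1
    rw [hchain x y]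
    have hJ := hJpos x y
    have hx := hΔpos x
    field_simp
  -- ## the measure is infinite
  haveI : Nonempty (Fin n) := ⟨⟨0, hn⟩⟩
  have hHinf : (volume.withDensity δ) Set.univ = ⊤ := by
    set B : Set (Fin n → ℝ) := Metric.closedBall 0 1 with hB
    have hBcomp : IsCompact B := isCompact_closedBall 0 1
    have hBpos : 0 < (volume.withDensity δ) B := by
      obtain ⟨x₀, hx₀B, hmax⟩ := hBcomp.exists_isMaxOn
        (Metric.nonempty_closedBall.2 zero_le_one) hΔc.continuousOn
      have hlb : ∀ x ∈ B, ENNReal.ofReal (Δ x₀)⁻¹ ≤ δ x := by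
        intro x hx
        rw [hδdef]
        exact ENNReal.ofReal_le_ofReal
          (inv_anti₀ (hΔpos x) (hmax hx))
      rw [withDensity_apply δ measurableSet_closedBall]
      calc (0 : ENNReal) < ENNReal.ofReal (Δ x₀)⁻¹ * volume B := by
            refine ENNReal.mul_pos ?_ ?_
            · simp [ENNReal.ofReal_pos, inv_pos, hΔpos x₀]
            · exact (Metric.measure_closedBall_pos volume 0 zero_lt_one).ne'
        _ = ∫⁻ _ in B, ENNReal.ofReal (Δ x₀)⁻¹ ∂volume := by
            rw [setLIntegral_const]
        _ ≤ ∫⁻ x in B, δ x ∂volume :=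
            setLIntegral_mono hδm hlb
    have htrans : ∀ y, (volume.withDensity δ) ((fun x => mul x y) '' B)
        = (volume.withDensity δ) B := by
      intro y
      have hSc : IsCompact ((fun x => mul x y) '' B) := hBcomp.image (hρs y).continuous
      have hSm : MeasurableSet ((fun x => mul x y) '' B) := hSc.isClosed.measurableSet
      have hf : Measurable (((fun x => mul x y) '' B).indicator
          (fun _ => (1 : ENNReal))) := measurable_const.indicator hSm
      have h := hRI y _ hf
      have hptw : ∀ x, ((fun x => mul x y) '' B).indicator (fun _ => (1 : ENNReal)) (mul x y)
          = B.indicator (fun _ => (1 : ENNReal)) x := by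
        intro x
        by_cases hx : x ∈ B
        · rw [Set.indicator_of_mem hx, Set.indicator_of_mem (Set.mem_image_of_mem _ hx)]
        · rw [Set.indicator_of_notMem hx, Set.indicator_of_notMem]
          rintro ⟨b, hb, hbe⟩
          replace hbe : mul b y = mul x y := hbe
          have : mul (mul b y) (inv y) = mul (mul x y) (inv y) := by rw [hbe]
          rw [hassoc, hassoc, hinvr, hidr, hidr] at this
          exact hx (this ▸ hb)
      rw [lintegral_congr hptw] at h
      rw [lintegral_indicator measurableSet_closedBall,
        lintegral_indicator hSm] at h
      simpa [Measure.restrict_apply] using h.symm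
    -- choose infinitely many disjoint translates
    have key : ∀ K : Set (Fin n → ℝ), IsCompact K →
        ∃ z, ∀ w ∈ (fun x => mul x z) '' B, w ∉ K := by
      intro K hK
      have hT : IsCompact ((fun q : (Fin n → ℝ) × (Fin n → ℝ) => mul (inv q.1) q.2)
          '' (B ×ˢ K)) := by
        apply (hBcomp.prod hK).image
        exact hmul_smooth.continuous.comp
          ((hinv_smooth.continuous.comp continuous_fst).prodMk continuous_snd)
      obtain ⟨z, hz⟩ := Set.ne_univ_iff_exists_notMem _ |>.1 hT.ne_univ
      refine ⟨z, ?_⟩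
      rintro w ⟨x, hxB, rfl⟩ hwK
      apply hz
      refine ⟨(x, mul x z), Set.mk_mem_prod hxB hwK, ?_⟩
      simp only
      rw [← hassoc, hinvl, hidl]
    choose F hF using key
    let seq : ℕ → {S : Set (Fin n → ℝ) // IsCompact S} := fun k =>
      Nat.rec ⟨∅, isCompact_empty⟩
        (fun _ S => ⟨S.1 ∪ (fun x => mul x (F S.1 S.2)) '' B,
          S.2.union (hBcomp.image (hρs _).continuous)⟩) k
    let ys : ℕ → Fin n → ℝ := fun k => F (seq k).1 (seq k).2
    have hstep : ∀ k, (seq (k+1)).1 = (seq k).1 ∪ (fun x => mul x (ys k)) '' B :=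
      fun k => rfl
    have hmono : ∀ j k, j ≤ k → (seq j).1 ⊆ (seq k).1 := by
      intro j k hjk
      induction k with
      | zero => simp_all
      | succ m ih =>
        rcases Nat.lt_or_ge j (m+1) with h | h
        · refine (ih (Nat.lt_succ_iff.1 h)).trans ?_
          rw [hstep m]
          exact Set.subset_union_left
        · have : j = m + 1 := le_antisymm hjk h
          subst this
          exact subset_rfl
    have hdisj : Pairwise (Function.onFun Disjoint
        (fun k => (fun x => mul x (ys k)) '' B)) := by
      have hdisj0 : ∀ j k, j < k →
          Disjoint ((fun x => mul x (ys j)) '' B) ((fun x => mul x (ys k)) '' B) := by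
        intro j k hjk
        rw [Set.disjoint_right]
        intro w hwk hwj
        have h1 : (fun x => mul x (ys j)) '' B ⊆ (seq (j+1)).1 := by
          rw [hstep j]; exact Set.subset_union_right
        have h2 : w ∈ (seq k).1 := hmono (j+1) k hjk (h1 hwj)
        exact hF (seq k).1 (seq k).2 w hwk h2
      intro j k hjk
      rcases lt_or_gt_of_ne hjk with h | h
      · exact hdisj0 j k h
      · exact (hdisj0 k j h).symm
    have hmeasS : ∀ k, MeasurableSet ((fun x => mul x (ys k)) '' B) := fun k =>
      (hBcomp.image (hρs _).continuous).isClosed.measurableSet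
    have hUnion := measure_iUnion (μ := volume.withDensity δ) hdisj hmeasS
    have hsum : (volume.withDensity δ) (⋃ k, (fun x => mul x (ys k)) '' B) = ⊤ := by
      rw [hUnion]
      have : ∀ k : ℕ, (volume.withDensity δ) ((fun x => mul x (ys k)) '' B)
          = (volume.withDensity δ) B := fun k => htrans (ys k)
      rw [tsum_congr this]
      exact ENNReal.tsum_const_eq_top_of_ne_zero hBpos.ne'
    exact top_le_iff.1 (hsum ▸ measure_mono (Set.subset_univ _))

  -- ## Step 3 : the auxiliary function v and its L-image
  set v : (Fin n → ℝ) → ℝ := fun x => (u x + 1) ^ p - 1 with hvdef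
  have hU1 : ∀ x, (1:ℝ) ≤ u x + 1 := fun x => by linarith [hpos x]
  have hv2 : ContDiff ℝ 2 v := by
    rw [contDiff_iff_contDiffAt]
    intro x
    refine ContDiffAt.sub ?_ contDiffAt_const
    exact (Real.contDiffAt_rpow_const_of_ne
      (by intro h; nlinarith [hpos x])).comp x
      ((hu.contDiffAt.of_le (WithTop.coe_le_coe.2 le_top)).add contDiffAt_const)
  have hvc : Continuous v := hv2.continuous
  have hv0 : ∀ x, 0 ≤ v x := by
    intro x
    have h1 : (1:ℝ) = 1 ^ p := (Real.one_rpow p).symm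
    have h2 : (1:ℝ) ^ p ≤ (u x + 1) ^ p :=
      Real.rpow_le_rpow zero_le_one (hU1 x) hp0.le
    rw [hvdef]
    simp only
    nlinarith [h2]
  have hvle : ∀ x, v x ≤ u x ^ p := by
    intro x
    have := real_rpow_add_one_le (hpos x) hp0.le hp1.le
    rw [hvdef]
    simp only
    linarith
  set Γ : (Fin n → ℝ) → ℝ :=
    fun x => ∑ i, ∑ j, a i j x * pderiv' n i u x * pderiv' n j u x with hΓdef
  have hqc : ∀ j, Continuous (pderiv' n j u) := fun j => (contDiff_q hu j).continuous
  have hΓc : Continuous Γ := by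
    apply continuous_finset_sum
    intro i _
    apply continuous_finset_sum
    intro j _
    exact (((ha i j).continuous.mul (hqc i)).mul (hqc j))
  have hΓ0 : ∀ x, 0 ≤ Γ x := fun x => hpsd x fun i => pderiv' n i u x
  set sfun : (Fin n → ℝ) → ℝ :=
    fun x => p * (1 - p) * (u x + 1) ^ (p - 2) * Γ x with hsdef
  have hsc : Continuous sfun := by
    apply Continuous.mul
    · apply continuous_const.mul
      exact (hu.continuous.add continuous_const).rpow_const
        fun x => Or.inl (by intro h; simp only [Pi.add_apply] at h; nlinarith [hpos x])
    · exact hΓc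
  have hs0 : ∀ x, 0 ≤ sfun x := by
    intro x
    apply mul_nonneg (mul_nonneg (by nlinarith) (Real.rpow_nonneg (by linarith [hpos x]) _))
    exact hΓ0 x
  have hLv : ∀ x, Lop n a b v x = - sfun x := by
    intro x
    rw [hvdef]
    rw [Lop_rpow_shift a b hu hpos p x, hharm x]
    rw [hsdef, hΓdef]
    ring
  -- ## Step 4 : the representation formula for v
  have hclos : IsCompact (closure Ω) :=
    Metric.isCompact_of_isClosed_isBounded isClosed_closure hΩb.closure
  have hfrontc : IsCompact (frontier Ω) :=
    hclos.of_isClosed_subset isClosed_frontier frontier_subset_closure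
  set g : (Fin n → ℝ) → ℝ := fun x => ∫ y, v (mul x y) ∂μ with hgdef
  have hgc : Continuous g := cont_integral_mul hmul_smooth.continuous hfrontc hμsupp hvc
  have hg0 : ∀ x, 0 ≤ g x := fun x => integral_nonneg fun y => hv0 _
  have hint : ∀ x, Integrable (fun y => v (mul x y)) μ := fun x =>
    integrable_of_null_compl hfrontc hμsupp
      (hvc.comp (hmul_smooth.continuous.comp (Continuous.prodMk_right x)))
  have hWs : ∀ x, v x - g x = ∫ y, sfun (mul x y) ∂ν := by
    intro x
    have h := hrep v hv2 x
    have h2 : ∫ y, Lop n a b v (mul x y) ∂ν = ∫ y, -sfun (mul x y) ∂ν :=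
      integral_congr_ae (Filter.Eventually.of_forall fun y => hLv _)
    rw [h2, integral_neg] at h
    rw [hgdef]
    simp only
    linarith [h]
  have hW0 : ∀ x, 0 ≤ v x - g x := by
    intro x
    rw [hWs x]
    exact integral_nonneg fun y => hs0 _
  have hWc : Continuous fun x => v x - g x := hvc.sub hgc
  -- ## Step 5 : integration against the right-invariant measure
  have hHd : Hcheck n mul e = volume.withDensity δ := rfl
  rw [hHd] at hup
  have hvm : Measurable fun x => ENNReal.ofReal (v x) :=
    (ENNReal.continuous_ofReal.comp hvc).measurable
  have hIfin : ∫⁻ x, ENNReal.ofReal (v x) ∂(volume.withDensity δ) ≠ ⊤ := by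
    refine (lt_of_le_of_lt ?_ hup).ne
    exact lintegral_mono fun x => ENNReal.ofReal_le_ofReal (hvle x)
  have hgl : ∀ x, ENNReal.ofReal (g x) = ∫⁻ y, ENNReal.ofReal (v (mul x y)) ∂μ := fun x =>
    MeasureTheory.ofReal_integral_eq_lintegral_ofReal (hint x)
      (Filter.Eventually.of_forall fun y => hv0 _)
  have hIg : ∫⁻ x, ENNReal.ofReal (g x) ∂(volume.withDensity δ)
      = ∫⁻ x, ENNReal.ofReal (v x) ∂(volume.withDensity δ) := by
    calc ∫⁻ x, ENNReal.ofReal (g x) ∂(volume.withDensity δ)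
        = ∫⁻ x, ∫⁻ y, ENNReal.ofReal (v (mul x y)) ∂μ ∂(volume.withDensity δ) := by
          exact lintegral_congr fun x => hgl x
      _ = ∫⁻ y, ∫⁻ x, ENNReal.ofReal (v (mul x y)) ∂(volume.withDensity δ) ∂μ := by
          apply lintegral_lintegral_swap
          exact (ENNReal.continuous_ofReal.comp
            (hvc.comp hmul_smooth.continuous)).aemeasurable
      _ = ∫⁻ _, (∫⁻ x, ENNReal.ofReal (v x) ∂(volume.withDensity δ)) ∂μ :=
          lintegral_congr fun y => hRI y _ hvm
      _ = ∫⁻ x, ENNReal.ofReal (v x) ∂(volume.withDensity δ) := by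
          rw [lintegral_const, measure_univ, mul_one]
  have hWlint : ∫⁻ x, ENNReal.ofReal (v x - g x) ∂(volume.withDensity δ) = 0 := by
    have hsplit : ∫⁻ x, ENNReal.ofReal (v x) ∂(volume.withDensity δ)
        = ∫⁻ x, ENNReal.ofReal (g x) ∂(volume.withDensity δ)
          + ∫⁻ x, ENNReal.ofReal (v x - g x) ∂(volume.withDensity δ) := by
      have hm2 : Measurable fun x => ENNReal.ofReal (g x) :=
        (ENNReal.continuous_ofReal.comp hgc).measurable
      rw [← lintegral_add_left hm2]
      apply lintegral_congr
      intro x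
      rw [← ENNReal.ofReal_add (hg0 x) (hW0 x)]
      congr 1
      ring
    rw [hIg] at hsplit
    have := hsplit.symm
    nth_rewrite 2 [← add_zero (∫⁻ x, ENNReal.ofReal (v x) ∂(volume.withDensity δ))] at this
    exact (ENNReal.add_right_inj hIfin).1 this
  have hWzero : ∀ x, v x - g x = 0 := by
    have hae : ∀ᵐ x ∂(volume.withDensity δ), ENNReal.ofReal (v x - g x) = 0 := by
      have hm : Measurable fun x => ENNReal.ofReal (v x - g x) :=
        (ENNReal.continuous_ofReal.comp hWc).measurable
      have h := (lintegral_eq_zero_iff hm).1 hWlint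
      filter_upwards [h] with x hx
      simpa using hx
    set N : Set (Fin n → ℝ) := {x | v x - g x ≠ 0} with hNdef
    have hNopen : IsOpen N := isOpen_ne_fun hWc continuous_const
    have hNnull : (volume.withDensity δ) N = 0 := by
      rw [ae_iff] at hae
      refine le_antisymm (le_trans (measure_mono ?_) hae.le) (by simp)
      intro x hx
      simp only [hNdef, Set.mem_setOf_eq] at hx ⊢
      intro h
      have hxpos : 0 < v x - g x := lt_of_le_of_ne (hW0 x) (Ne.symm hx)
      rw [ENNReal.ofReal_eq_zero] at h
      linarith
    have hvolN : volume N = 0 := by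
      rw [withDensity_apply δ hNopen.measurableSet,
        setLIntegral_eq_zero_iff hNopen.measurableSet hδm] at hNnull
      rw [ae_iff] at hNnull
      have hset : {x | ¬ (x ∈ N → δ x = 0)} = N := by
        ext z
        simp only [Set.mem_setOf_eq, Classical.not_imp]
        constructor
        · rintro ⟨hz, -⟩; exact hz
        · intro hz
          refine ⟨hz, ?_⟩
          intro h0
          rw [hδdef] at h0
          simp only at h0
          rw [ENNReal.ofReal_eq_zero] at h0
          have h1 := inv_pos.2 (hΔpos z)
          linarith
      rwa [hset] at hNnull
    have hNempty : N = ∅ := (hNopen.measure_eq_zero_iff volume).1 hvolN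
    intro x
    by_contra hx
    have : x ∈ N := hx
    rw [hNempty] at this
    exact this
  -- ## Step 6 : the quadratic form vanishes
  have hΓzero : ∀ x, Γ x = 0 := by
    have hsz : ∀ x, sfun x = 0 := by
      apply hposdet sfun hsc hs0
      intro x
      rw [← hWs x, hWzero x]
    intro x
    have h := hsz x
    rw [hsdef] at h
    simp only at h
    have hfac : 0 < p * (1 - p) * (u x + 1) ^ (p - 2) := by
      apply mul_pos (by nlinarith)
      exact Real.rpow_pos_of_pos (by linarith [hpos x]) _
    have := mul_eq_zero.1 h
    rcases this with h1 | h1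
    · exact absurd h1 hfac.ne'
    · exact h1

  -- ## Step 7 : the gradient is killed by the rows of a
  have hgrad0 : ∀ x k, ∑ j, a k j x * pderiv' n j u x = 0 := by
    intro x k
    exact quad_zero (fun i j => a i j x) (fun i j => hsym i j x)
      (fun ξ => hpsd x ξ) (fun i => pderiv' n i u x) (hΓzero x) k
  -- expansion of directional derivatives
  have hexp : ∀ (x Xv : Fin n → ℝ),
      fderiv ℝ u x Xv = ∑ j, Xv j * pderiv' n j u x := by
    intro x Xv
    conv_lhs => rw [← Finset.univ_sum_single Xv]
    rw [map_sum]
    refine Finset.sum_congr rfl fun j _ => ?_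
    have : (Pi.single j (Xv j) : Fin n → ℝ) = Xv j • (Pi.single j 1 : Fin n → ℝ) := by
      ext k
      by_cases h : k = j <;> simp [Pi.single_apply, h]
    rw [this, _root_.map_smul, smul_eq_mul, pderiv']
  have hfdXvec : ∀ (i : Fin n) (x : Fin n → ℝ), fderiv ℝ u x (Xvec n a i x) = 0 := by
    intro i x
    rw [hexp]
    exact hgrad0 x i
  -- ## Step 9 : the drift field also kills the gradient
  have hdiv : ∀ x : Fin n → ℝ, ∀ i,
      (∑ j, (a i j x * pderiv' n i (pderiv' n j u) x
        + pderiv' n j u x * pderiv' n i (fun y => a i j y) x)) = 0 := by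
    intro x i
    have hzero_i : (fun z => ∑ j, a i j z * pderiv' n j u z) = fun _ => (0:ℝ) :=
      funext fun z => hgrad0 z i
    have hders : ∀ j : Fin n, HasFDerivAt (fun z => a i j z * pderiv' n j u z)
        (a i j x • fderiv ℝ (pderiv' n j u) x + pderiv' n j u x • fderiv ℝ (a i j) x) x :=
      fun j => (((ha i j).differentiable (by simp) x).hasFDerivAt).mul
        (((contDiff_q hu j).differentiable (by simp) x).hasFDerivAt)
    have hsum : HasFDerivAt (fun z => ∑ j, a i j z * pderiv' n j u z)
        (∑ j, (a i j x • fderiv ℝ (pderiv' n j u) x + pderiv' n j u x • fderiv ℝ (a i j) x)) x :=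
      HasFDerivAt.fun_sum fun j _ => hders j
    rw [hzero_i] at hsum
    have h0 : (∑ j, (a i j x • fderiv ℝ (pderiv' n j u) x
        + pderiv' n j u x • fderiv ℝ (a i j) x)) = 0 := by
      rw [← hsum.fderiv]
      exact fderiv_const_apply 0
    have happ := congrArg (fun L => L (Pi.single i (1:ℝ))) h0
    simp only [ContinuousLinearMap.coe_sum', Finset.sum_apply,
      ContinuousLinearMap.add_apply, ContinuousLinearMap.coe_smul',
      Pi.smul_apply, smul_eq_mul, ContinuousLinearMap.zero_apply] at happ
    rw [← happ]
    exact Finset.sum_congr rfl fun j _ => rfl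
  have hfdXzero : ∀ x : Fin n → ℝ, fderiv ℝ u x (Xzero n a b x) = 0 := by
    intro x
    rw [hexp]
    have hLu := hharm x
    rw [Lop] at hLu
    have hsum2 : ∑ i, ∑ j, (a i j x * pderiv' n i (pderiv' n j u) x
        + pderiv' n j u x * pderiv' n i (fun y => a i j y) x) = 0 :=
      Finset.sum_eq_zero fun i _ => hdiv x i
    rw [Finset.sum_congr rfl fun i (_ : i ∈ Finset.univ) => Finset.sum_add_distrib]
      at hsum2
    rw [Finset.sum_add_distrib] at hsum2
    -- Xzero expansion
    have : ∀ j, Xzero n a b x j * pderiv' n j u x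
        = b j x * pderiv' n j u x
          - ∑ i, pderiv' n j u x * pderiv' n i (fun y => a i j y) x := by
      intro j
      simp only [Xzero]
      rw [sub_mul, Finset.sum_mul]
      congr 1
      exact Finset.sum_congr rfl fun i _ => by ring
    rw [Finset.sum_congr rfl fun j (_ : j ∈ Finset.univ) => this j,
      Finset.sum_sub_distrib]
    rw [Finset.sum_comm (f := fun j i => pderiv' n j u x * pderiv' n i (fun y => a i j y) x)]
    linarith [hsum2, hLu]
  -- ## Step 10 : all iterated brackets kill the gradient
  have hkill : ∀ X, LieGen n (insert (Xzero n a b) (Set.range (Xvec n a))) X →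
      ContDiff ℝ (⊤ : ℕ∞) X ∧ ∀ x, fderiv ℝ u x (X x) = 0 := by
    intro X hX
    induction hX with
    | base X hmem =>
      rcases hmem with h | ⟨i, rfl⟩
      · subst h
        constructor
        · apply contDiff_pi.2
          intro j
          simp only [Xzero]
          apply (hb j).sub
          apply ContDiff.sum
          intro i _
          have : (fun y => pderiv' n i (fun z => a i j z) y)
              = fun y => fderiv ℝ (a i j) y (Pi.single i 1) := rfl
          exact ((ha i j).fderiv_right (by simp)).clm_apply contDiff_const
        · exact hfdXzero
      · exact ⟨contDiff_pi.2 fun j => ha i j, hfdXvec i⟩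
    | bracket X Y hXg hYg ihX ihY =>
      obtain ⟨hXs, hXk⟩ := ihX
      obtain ⟨hYs, hYk⟩ := ihY
      constructor
      · exact (((hYs.fderiv_right (by simp)).clm_apply hXs).sub
          ((hXs.fderiv_right (by simp)).clm_apply hYs))
      · intro x
        have hc : HasFDerivAt (fderiv ℝ u) (fderiv ℝ (fderiv ℝ u) x) x :=
          (((hu.fderiv_right (m := (⊤ : ℕ∞)) (by simp)).differentiable (by simp)) x).hasFDerivAt
        have hXd : HasFDerivAt X (fderiv ℝ X x) x :=
          ((hXs.differentiable (by simp)) x).hasFDerivAt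
        have hYd : HasFDerivAt Y (fderiv ℝ Y x) x :=
          ((hYs.differentiable (by simp)) x).hasFDerivAt
        have hsymm : IsSymmSndFDerivAt ℝ u x :=
          hu.contDiffAt.isSymmSndFDerivAt (by rw [minSmoothness_of_isRCLikeNormedField]; exact WithTop.coe_le_coe.2 le_top)
        have hkey : ∀ (Z : (Fin n → ℝ) → (Fin n → ℝ)),
            HasFDerivAt Z (fderiv ℝ Z x) x → (∀ z, fderiv ℝ u z (Z z) = 0) →
            ∀ w : Fin n → ℝ, fderiv ℝ u x (fderiv ℝ Z x w)
              + fderiv ℝ (fderiv ℝ u) x w (Z x) = 0 := by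
          intro Z hZd hZk w
          have hfun : (fun z => fderiv ℝ u z (Z z)) = fun _ => (0:ℝ) :=
            funext fun z => hZk z
          have hfd : HasFDerivAt (fun z => fderiv ℝ u z (Z z))
              ((fderiv ℝ u x).comp (fderiv ℝ Z x)
                + (fderiv ℝ (fderiv ℝ u) x).flip (Z x)) x := hc.clm_apply hZd
          rw [hfun] at hfd
          have h0 : ((fderiv ℝ u x).comp (fderiv ℝ Z x)
              + (fderiv ℝ (fderiv ℝ u) x).flip (Z x)) = 0 := by
            rw [← hfd.fderiv]
            exact fderiv_const_apply 0
          have := congrArg (fun L => L w) h0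
          simpa using this
        have h1 := hkey Y hYd hYk (X x)
        have h2 := hkey X hXd hXk (Y x)
        have h3 : fderiv ℝ (fderiv ℝ u) x (X x) (Y x)
            = fderiv ℝ (fderiv ℝ u) x (Y x) (X x) := hsymm (X x) (Y x)
        simp only [map_sub]
        linarith [h1, h2, h3]
  -- ## Step 11 : u is constant
  have hfderiv0 : ∀ x, fderiv ℝ u x = 0 := by
    intro x
    have hspan := hHor x
    have hker : Submodule.span ℝ {w : Fin n → ℝ |
        ∃ X, LieGen n (insert (Xzero n a b) (Set.range (Xvec n a))) X ∧ w = X x}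
        ≤ LinearMap.ker (fderiv ℝ u x : (Fin n → ℝ) →ₗ[ℝ] ℝ) := by
      rw [Submodule.span_le]
      rintro w ⟨X, hX, rfl⟩
      exact (hkill X hX).2 x
    rw [hspan, top_le_iff] at hker
    ext w
    have : w ∈ LinearMap.ker (fderiv ℝ u x : (Fin n → ℝ) →ₗ[ℝ] ℝ) := hker ▸ Submodule.mem_top
    simpa using this
  have hconst : ∀ x, u x = u e :=
    fun x => is_const_of_fderiv_eq_zero (hu.differentiable (by simp)) hfderiv0 x e
  -- ## Final step : the constant must be zero
  intro x
  rw [hconst x]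
  by_contra hne
  have hce : 0 < u e := lt_of_le_of_ne (hpos e) (Ne.symm hne)
  have hcp : 0 < u e ^ p := Real.rpow_pos_of_pos hce p
  have : ∫⁻ x, ENNReal.ofReal (u x ^ p) ∂(volume.withDensity δ)
      = ENNReal.ofReal (u e ^ p) * (volume.withDensity δ) Set.univ := by
    rw [← lintegral_const]
    exact lintegral_congr fun z => by rw [hconst z]
  rw [this, hHinf, ENNReal.mul_top (by simpa [ENNReal.ofReal_eq_zero] using hcp.not_ge)]
    at hup
  exact (lt_irrefl _ hup).elim
end

section
/- Let L be a second-order operator on ℝⁿ with smooth coefficients, symmetric positive semidefinite matrix A(x), and associated vector fields X₀, X₁, …, Xₙ satisfying Hörmander's rank condition. Let Ω ⊆ ℝⁿ be a connected open set and u ∈ C²(Ω,ℝ). Then the following are equivalent: (1) u is constant on Ω; (2) X₀u, X₁u, …, Xₙu all vanish on Ω; (3) Ψ_A(u) ≡ 0 and X₀u ≡ 0 on Ω; (4) Lu = 0 on Ω and Ψ_A(u) ≡ 0 on Ω. -/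
open scoped ContDiff


/-- `Ψ_A(u)(x) = Σ_{i,j} a_{ij}(x) ∂u/∂x_i ∂u/∂x_j = ⟨A(x)∇u(x), ∇u(x)⟩`. -/
noncomputable def PsiA (n : ℕ) (a : Fin n → Fin n → (Fin n → ℝ) → ℝ)
    (u : (Fin n → ℝ) → ℝ) (x : Fin n → ℝ) : ℝ :=
  ∑ i, ∑ j, a i j x * pderiv' n i u x * pderiv' n j u x

/-- The action of the vector field `X_i` on a function:
`X_i u = Σ_j a_{ij}(x) ∂u/∂x_j`. -/
noncomputable def XvecAct (n : ℕ) (a : Fin n → Fin n → (Fin n → ℝ) → ℝ) (i : Fin n)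
    (u : (Fin n → ℝ) → ℝ) (x : Fin n → ℝ) : ℝ :=
  ∑ j, Xvec n a i x j * pderiv' n j u x

/-- The action of the drift vector field `X₀` on a function. -/
noncomputable def XzeroAct (n : ℕ) (a : Fin n → Fin n → (Fin n → ℝ) → ℝ)
    (b : Fin n → (Fin n → ℝ) → ℝ) (u : (Fin n → ℝ) → ℝ) (x : Fin n → ℝ) : ℝ :=
  ∑ j, Xzero n a b x j * pderiv' n j u x


lemma clm_apply_eq_sum' {n : ℕ} (L : (Fin n → ℝ) →L[ℝ] ℝ) (v : Fin n → ℝ) :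
    L v = ∑ j, v j * L ((Pi.single j 1 : Fin n → ℝ)) := by
  have hv : v = ∑ j, v j • ((Pi.single j 1 : Fin n → ℝ)) := by
    ext k
    simp [Pi.single_apply, Finset.sum_ite_eq]
  conv_lhs => rw [hv]
  rw [map_sum]
  simp [smul_eq_mul]

lemma quad_root {s c : ℝ} (hc : 0 ≤ c) (h : ∀ t : ℝ, 0 ≤ 2*t*s + t^2*c) : s = 0 := by
  rcases eq_or_lt_of_le hc with hc0 | hc0
  · have h1 := h (-s)
    nlinarith [sq_nonneg s]
  · have h1 := h (-s/c)
    have hne : c ≠ 0 := ne_of_gt hc0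
    have e : 2*(-s/c)*s + (-s/c)^2*c = -(s^2)/c := by field_simp; ring
    rw [e] at h1
    have e2 : s^2 = c * (s^2/c) := by field_simp
    have h4 : c * (s^2/c) ≤ 0 := mul_nonpos_of_nonneg_of_nonpos (le_of_lt hc0) (by rw [neg_div] at h1; linarith)
    have h2 : s^2 ≤ 0 := by rw [e2]; exact h4
    have h3 : s^2 = 0 := le_antisymm h2 (sq_nonneg s)
    exact (pow_eq_zero_iff two_ne_zero).mp h3

lemma psd_row_eq_zero' {n : ℕ} (A : Fin n → Fin n → ℝ) (hsym : ∀ i j, A i j = A j i)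
    (hpsd : ∀ ξ : Fin n → ℝ, 0 ≤ ∑ i, ∑ j, A i j * ξ i * ξ j)
    (p : Fin n → ℝ) (hq : ∑ i, ∑ j, A i j * p i * p j = 0) (k : Fin n) :
    ∑ j, A k j * p j = 0 := by
  have hc : 0 ≤ A k k := by
    have := hpsd ((Pi.single k 1 : Fin n → ℝ))
    simpa [Pi.single_apply, mul_ite, ite_mul, Finset.sum_ite_eq, Finset.sum_ite_eq'] using this
  apply quad_root hc
  intro t
  have h0 := hpsd (fun i => p i + t * (Pi.single k 1 : Fin n → ℝ) i)
  have expand : ∑ i, ∑ j, A i j * (p i + t * (Pi.single k 1 : Fin n → ℝ) i) * (p j + t * (Pi.single k 1 : Fin n → ℝ) j)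
      = (∑ i, ∑ j, A i j * p i * p j)
        + t * (∑ i, ∑ j, A i j * (Pi.single k 1 : Fin n → ℝ) i * p j)
        + t * (∑ i, ∑ j, A i j * p i * (Pi.single k 1 : Fin n → ℝ) j)
        + t^2 * (∑ i, ∑ j, A i j * (Pi.single k 1 : Fin n → ℝ) i * (Pi.single k 1 : Fin n → ℝ) j) := by
    simp only [Finset.mul_sum]
    rw [← Finset.sum_add_distrib, ← Finset.sum_add_distrib, ← Finset.sum_add_distrib]
    refine Finset.sum_congr rfl fun i _ => ?_
    rw [← Finset.sum_add_distrib, ← Finset.sum_add_distrib, ← Finset.sum_add_distrib]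
    refine Finset.sum_congr rfl fun j _ => ?_
    ring
  have e1 : ∑ i, ∑ j, A i j * (Pi.single k 1 : Fin n → ℝ) i * p j = ∑ j, A k j * p j := by
    simp [Pi.single_apply, mul_ite, ite_mul, Finset.sum_ite_eq, Finset.sum_ite_eq']
  have e2 : ∑ i, ∑ j, A i j * p i * (Pi.single k 1 : Fin n → ℝ) j = ∑ j, A k j * p j := by
    have h5 : ∀ i, ∑ j, A i j * p i * (Pi.single k 1 : Fin n → ℝ) j = A i k * p i := by
      intro i; simp [Pi.single_apply, mul_ite, Finset.sum_ite_eq']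
    simp only [h5]
    refine Finset.sum_congr rfl fun i _ => ?_
    rw [hsym i k]
  have e3 : ∑ i, ∑ j, A i j * (Pi.single k 1 : Fin n → ℝ) i * (Pi.single k 1 : Fin n → ℝ) j = A k k := by
    simp [Pi.single_apply, mul_ite, ite_mul, Finset.sum_ite_eq, Finset.sum_ite_eq']
  rw [expand, e1, e2, e3, hq] at h0
  linarith

lemma const_on_of_fderiv_eq_zero' {n : ℕ} {f : (Fin n → ℝ) → ℝ} {s : Set (Fin n → ℝ)}
    (hs : IsOpen s) (hsc : IsPreconnected s)
    (hd : ∀ x ∈ s, DifferentiableAt ℝ f x) (h0 : ∀ x ∈ s, fderiv ℝ f x = 0)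
    {x y : Fin n → ℝ} (hx : x ∈ s) (hy : y ∈ s) : f x = f y := by
  haveI := Subtype.preconnectedSpace hsc
  have hlc : IsLocallyConstant (fun p : s => f p) := by
    rw [IsLocallyConstant.iff_exists_open]
    rintro ⟨z, hz⟩
    obtain ⟨ε, hε, hball⟩ := Metric.isOpen_iff.mp hs z hz
    refine ⟨Subtype.val ⁻¹' Metric.ball z ε,
      (continuous_subtype_val.isOpen_preimage _ Metric.isOpen_ball),
      Metric.mem_ball_self hε, ?_⟩
    rintro ⟨w, hw⟩ hwb
    exact Convex.is_const_of_fderivWithin_eq_zero (convex_ball z ε)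
      (fun p hp => (hd p (hball hp)).differentiableWithinAt)
      (fun p hp => by rw [fderivWithin_of_isOpen Metric.isOpen_ball hp]; exact h0 p (hball hp))
      hwb (Metric.mem_ball_self hε)
  exact hlc.apply_eq_of_preconnectedSpace ⟨x, hx⟩ ⟨y, hy⟩

/-- Lemma A: characterizations of constancy for `C²` functions on a connected open set,
under Hörmander's rank condition for `X₀, X₁, …, Xₙ`. -/
theorem constancy_tfae
    {n : ℕ}
    (a : Fin n → Fin n → (Fin n → ℝ) → ℝ) (b : Fin n → (Fin n → ℝ) → ℝ)
    (ha : ∀ i j, ContDiff ℝ (⊤ : ℕ∞) (a i j)) (hb : ∀ j, ContDiff ℝ (⊤ : ℕ∞) (b j))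
    (hsym : ∀ i j x, a i j x = a j i x)
    (hpsd : ∀ (x ξ : Fin n → ℝ), 0 ≤ ∑ i, ∑ j, a i j x * ξ i * ξ j)
    (hHor : Hormander n (insert (Xzero n a b) (Set.range (Xvec n a))))
    (Ω : Set (Fin n → ℝ)) (hΩo : IsOpen Ω) (hΩc : IsPreconnected Ω)
    (u : (Fin n → ℝ) → ℝ) (hu : ContDiffOn ℝ 2 u Ω) :
    List.TFAE
      [ ∃ c : ℝ, ∀ x ∈ Ω, u x = c,
        ∀ x ∈ Ω, XzeroAct n a b u x = 0 ∧ ∀ i, XvecAct n a i u x = 0,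
        ∀ x ∈ Ω, PsiA n a u x = 0 ∧ XzeroAct n a b u x = 0,
        ∀ x ∈ Ω, Lop n a b u x = 0 ∧ PsiA n a u x = 0 ] := by
  have hu2 : ∀ x ∈ Ω, ContDiffAt ℝ 2 u x := fun x hx => hu.contDiffAt (hΩo.mem_nhds hx)
  have hud : ∀ x ∈ Ω, DifferentiableAt ℝ u x := fun x hx =>
    (hu2 x hx).differentiableAt (by norm_num)
  have hpd : ∀ (j : Fin n), ∀ x ∈ Ω, DifferentiableAt ℝ (pderiv' n j u) x := by
    intro j x hx
    have h1 : ContDiffAt ℝ 1 (fderiv ℝ u) x := (hu2 x hx).fderiv_right (by norm_num)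
    exact (h1.differentiableAt (by norm_num)).clm_apply (differentiableAt_const _)
  -- From `PsiA = 0` at a point, all `XvecAct` vanish there.
  have hrow : ∀ x ∈ Ω, PsiA n a u x = 0 → ∀ i, XvecAct n a i u x = 0 := by
    intro x hx hpsi i
    have := psd_row_eq_zero' (fun i j => a i j x) (fun i j => hsym i j x) (hpsd x)
      (fun j => pderiv' n j u x) hpsi i
    simpa [XvecAct, Xvec] using this
  -- key identity: if `PsiA ≡ 0` on `Ω` then `Lop = XzeroAct` on `Ω`.
  have key : (∀ x ∈ Ω, PsiA n a u x = 0) →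
      ∀ x ∈ Ω, Lop n a b u x = XzeroAct n a b u x := by
    intro hpsi x hx
    have hXv : ∀ y ∈ Ω, ∀ i, XvecAct n a i u y = 0 := fun y hy => hrow y hy (hpsi y hy)
    have hg0 : ∀ i : Fin n, fderiv ℝ (XvecAct n a i u) x = 0 := by
      intro i
      have hev : XvecAct n a i u =ᶠ[nhds x] (fun _ => 0) :=
        Filter.eventuallyEq_of_mem (hΩo.mem_nhds hx) (fun y hy => hXv y hy i)
      rw [hev.fderiv_eq]
      exact fderiv_const_apply 0
    have hterm : ∀ i : Fin n, fderiv ℝ (XvecAct n a i u) x ((Pi.single i 1 : Fin n → ℝ))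
        = ∑ j, (a i j x * pderiv' n i (pderiv' n j u) x
            + pderiv' n j u x * pderiv' n i (fun y => a i j y) x) := by
      intro i
      have hda : ∀ j : Fin n, DifferentiableAt ℝ (fun y => a i j y) x :=
        fun j => ((ha i j).differentiable (by simp)) x
      have hdiff : ∀ j ∈ Finset.univ, DifferentiableAt ℝ
          (fun y => a i j y * pderiv' n j u y) x :=
        fun j _ => (hda j).mul (hpd j x hx)
      have hXe : XvecAct n a i u = fun y => ∑ j, a i j y * pderiv' n j u y := rfl
      rw [hXe, fderiv_fun_sum hdiff, ContinuousLinearMap.sum_apply]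
      refine Finset.sum_congr rfl fun j _ => ?_
      rw [fderiv_fun_mul (hda j) (hpd j x hx)]
      simp only [ContinuousLinearMap.add_apply, ContinuousLinearMap.smul_apply, smul_eq_mul]
      rfl
    have e3 : ∑ i, fderiv ℝ (XvecAct n a i u) x ((Pi.single i 1 : Fin n → ℝ))
        = (∑ i, ∑ j, a i j x * pderiv' n i (pderiv' n j u) x)
          + ∑ i, ∑ j, pderiv' n j u x * pderiv' n i (fun y => a i j y) x := by
      simp only [hterm, Finset.sum_add_distrib]
    have ez : ∑ i, fderiv ℝ (XvecAct n a i u) x ((Pi.single i 1 : Fin n → ℝ)) = 0 := by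
      simp [hg0]
    have e2 : XzeroAct n a b u x = (∑ j, b j x * pderiv' n j u x)
        - ∑ j, (∑ i, pderiv' n i (fun y => a i j y) x) * pderiv' n j u x := by
      simp [XzeroAct, Xzero, sub_mul, Finset.sum_sub_distrib]
    have e4 : ∑ j, (∑ i, pderiv' n i (fun y => a i j y) x) * pderiv' n j u x
        = ∑ i, ∑ j, pderiv' n j u x * pderiv' n i (fun y => a i j y) x := by
      simp only [Finset.sum_mul]
      rw [Finset.sum_comm]
      exact Finset.sum_congr rfl fun i _ => Finset.sum_congr rfl fun j _ => mul_comm _ _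
    have e1 : Lop n a b u x = (∑ i, ∑ j, a i j x * pderiv' n i (pderiv' n j u) x)
        + ∑ j, b j x * pderiv' n j u x := rfl
    linarith [e3, ez, e2, e4, e1]
  -- fderiv vanishes on Ω given statement (2)
  have hfz : (∀ x ∈ Ω, XzeroAct n a b u x = 0 ∧ ∀ i, XvecAct n a i u x = 0) →
      ∀ x ∈ Ω, fderiv ℝ u x = 0 := by
    intro h2 x hx
    have hLie : ∀ X, LieGen n (insert (Xzero n a b) (Set.range (Xvec n a))) X →
        ContDiff ℝ ∞ X ∧ ∀ y ∈ Ω, fderiv ℝ u y (X y) = 0 := by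
      intro X hX
      induction hX with
      | base X hXS =>
        constructor
        · rcases hXS with rfl | ⟨i, rfl⟩
          · rw [show Xzero n a b = fun x => fun j =>
                b j x - ∑ i, pderiv' n i (fun y => a i j y) x from rfl]
            refine contDiff_pi.mpr fun j => ((hb j).of_le (by simp)).sub ?_
            refine ContDiff.sum fun i _ => ?_
            exact ((contDiff_infty_iff_fderiv.mp ((ha i j).of_le (by simp))).2).clm_apply contDiff_const
          · exact contDiff_pi.mpr fun j => (ha i j).of_le (by simp)
        · intro y hy
          rcases hXS with rfl | ⟨i, rfl⟩
          · rw [clm_apply_eq_sum']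
            exact (h2 y hy).1
          · rw [clm_apply_eq_sum']
            exact (h2 y hy).2 i
      | bracket X Y hX hY ihX ihY =>
        obtain ⟨hXs, hXv⟩ := ihX
        obtain ⟨hYs, hYv⟩ := ihY
        constructor
        · exact ((contDiff_infty_iff_fderiv.mp hYs).2.clm_apply hXs).sub
            ((contDiff_infty_iff_fderiv.mp hXs).2.clm_apply hYs)
        · intro y hy
          have hF' : DifferentiableAt ℝ (fderiv ℝ u) y :=
            (((hu2 y hy).fderiv_right (m := 1) (by norm_num)).differentiableAt (by norm_num))
          have hXd : DifferentiableAt ℝ X y := (contDiff_infty_iff_fderiv.mp hXs).1.differentiableAt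
          have hYd : DifferentiableAt ℝ Y y := (contDiff_infty_iff_fderiv.mp hYs).1.differentiableAt
          have hsnd := (hu2 y hy).isSymmSndFDerivAt (n := 2) (by simp)
          have hzero : ∀ (Z W : (Fin n → ℝ) → (Fin n → ℝ)),
              DifferentiableAt ℝ W y → (∀ z ∈ Ω, fderiv ℝ u z (W z) = 0) →
              fderiv ℝ u y (fderiv ℝ W y (Z y))
                + fderiv ℝ (fderiv ℝ u) y (Z y) (W y) = 0 := by
            intro Z W hWd hWv
            have hev : (fun z => fderiv ℝ u z (W z)) =ᶠ[nhds y] (fun _ => 0) :=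
              Filter.eventuallyEq_of_mem (hΩo.mem_nhds hy) (fun z hz => hWv z hz)
            have h0 : fderiv ℝ (fun z => fderiv ℝ u z (W z)) y (Z y) = 0 := by
              rw [hev.fderiv_eq, fderiv_const_apply 0]
              rfl
            rw [fderiv_clm_apply hF' hWd] at h0
            simpa only [ContinuousLinearMap.add_apply, ContinuousLinearMap.comp_apply,
              ContinuousLinearMap.flip_apply, add_comm] using h0
          have hYX := hzero X Y hYd hYv
          have hXY := hzero Y X hXd hXv
          have hsy := hsnd (X y) (Y y)
          show fderiv ℝ u y (fderiv ℝ Y y (X y) - fderiv ℝ X y (Y y)) = 0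
          rw [map_sub]
          linarith [hYX, hXY, hsy]
    have hall : ∀ v ∈ Submodule.span ℝ
        {v : Fin n → ℝ | ∃ X, LieGen n (insert (Xzero n a b) (Set.range (Xvec n a))) X ∧ v = X x},
        fderiv ℝ u x v = 0 := by
      intro v hv
      induction hv using Submodule.span_induction with
      | mem v hv => obtain ⟨X, hX, rfl⟩ := hv; exact (hLie X hX).2 x hx
      | zero => simp
      | add v w _ _ hv hw => rw [map_add, hv, hw, add_zero]
      | smul c v _ hv => rw [map_smul, hv, smul_zero]
    refine ContinuousLinearMap.ext fun v => ?_
    have hv : v ∈ Submodule.span ℝ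
        {v : Fin n → ℝ | ∃ X, LieGen n (insert (Xzero n a b) (Set.range (Xvec n a))) X ∧ v = X x} := by
      rw [hHor x]; trivial
    simpa using hall v hv
  tfae_have 1 → 2 := by
    rintro ⟨c, hc⟩ x hx
    have hev : u =ᶠ[nhds x] (fun _ => c) :=
      Filter.eventuallyEq_of_mem (hΩo.mem_nhds hx) hc
    have h0 : fderiv ℝ u x = 0 := by rw [hev.fderiv_eq]; exact fderiv_const_apply c
    constructor
    · simp [XzeroAct, pderiv', h0]
    · intro i; simp [XvecAct, pderiv', h0]
  tfae_have 2 → 1 := by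
    intro h2
    rcases Set.eq_empty_or_nonempty Ω with hΩ | ⟨x₀, hx₀⟩
    · exact ⟨0, by simp [hΩ]⟩
    · exact ⟨u x₀, fun x hx =>
        const_on_of_fderiv_eq_zero' hΩo hΩc hud (hfz h2) hx hx₀⟩
  tfae_have 2 → 3 := by
    intro h2 x hx
    obtain ⟨hz, hv⟩ := h2 x hx
    refine ⟨?_, hz⟩
    have hP : PsiA n a u x = ∑ i, pderiv' n i u x * XvecAct n a i u x := by
      simp only [PsiA, XvecAct, Xvec, Finset.mul_sum]
      exact Finset.sum_congr rfl fun i _ => Finset.sum_congr rfl fun j _ => by ring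
    rw [hP]
    simp only [hv, mul_zero, Finset.sum_const_zero]
  tfae_have 3 → 2 := by
    intro h3 x hx
    exact ⟨(h3 x hx).2, hrow x hx (h3 x hx).1⟩
  tfae_have 3 → 4 := by
    intro h3 x hx
    refine ⟨?_, (h3 x hx).1⟩
    rw [key (fun y hy => (h3 y hy).1) x hx]
    exact (h3 x hx).2
  tfae_have 4 → 3 := by
    intro h4 x hx
    refine ⟨(h4 x hx).2, ?_⟩
    rw [← key (fun y hy => (h4 y hy).2) x hx]
    exact (h4 x hx).1
  tfae_finish
end

section
/- Write points of ℝ^{1+n} as (t,x) and let Ω = {(t,x) : t > 0}. Let L = L₀ − ∂_t be a heat-type operator with smooth coefficients. Suppose u ∈ C∞(Ω) ∩ C(closure Ω) satisfies Lu = 0 in Ω and u(0,x) = 0 for all x ∈ ℝⁿ, and let ū : ℝ^{1+n} → ℝ be the trivial extension of u (equal to u for t ≥ 0 and to 0 for t < 0). Then ū is a weak solution of Lū = 0 on all of ℝ^{1+n}: for every φ ∈ C_c^∞(ℝ^{1+n}), ∫_{ℝ^{1+n}} ū·L*φ dt dx = 0. -/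
open MeasureTheory

/-- Partial derivative in the `x_j` variable of a function on `ℝ^{1+n} = ℝ_t × ℝⁿ_x`. -/
noncomputable def pdx (n : ℕ) (j : Fin n) (u : ℝ × (Fin n → ℝ) → ℝ)
    (z : ℝ × (Fin n → ℝ)) : ℝ :=
  fderiv ℝ (fun y => u (z.1, y)) z.2 (Pi.single j 1)

/-- Partial derivative in the `t` variable of a function on `ℝ^{1+n} = ℝ_t × ℝⁿ_x`. -/
noncomputable def pdt (n : ℕ) (u : ℝ × (Fin n → ℝ) → ℝ) (z : ℝ × (Fin n → ℝ)) : ℝ :=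
  deriv (fun s => u (s, z.2)) z.1

/-- Partial derivative `∂f/∂x_i` for `f : ℝⁿ → ℝ`. -/
noncomputable def pdn (n : ℕ) (i : Fin n) (f : (Fin n → ℝ) → ℝ) (x : Fin n → ℝ) : ℝ :=
  fderiv ℝ f x (Pi.single i 1)

/-- The heat-type operator `L = L₀ - ∂_t` where
`L₀ = Σ a_{ij}(x) ∂²/∂x_i∂x_j + Σ b_j(x) ∂/∂x_j` acts only in the `x`-variables. -/
noncomputable def Lheat (n : ℕ) (a : Fin n → Fin n → (Fin n → ℝ) → ℝ)
    (b : Fin n → (Fin n → ℝ) → ℝ) (u : ℝ × (Fin n → ℝ) → ℝ) (z : ℝ × (Fin n → ℝ)) : ℝ :=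
  ((∑ i, ∑ j, a i j z.2 * pdx n i (pdx n j u) z) + ∑ j, b j z.2 * pdx n j u z) - pdt n u z

/-- The formal adjoint
`L*φ = Σ ∂²(a_{ij}φ)/∂x_i∂x_j - Σ ∂(b_jφ)/∂x_j + ∂φ/∂t`. -/
noncomputable def Lstar (n : ℕ) (a : Fin n → Fin n → (Fin n → ℝ) → ℝ)
    (b : Fin n → (Fin n → ℝ) → ℝ) (φ : ℝ × (Fin n → ℝ) → ℝ) (z : ℝ × (Fin n → ℝ)) : ℝ :=
  ((∑ i, ∑ j, pdx n i (pdx n j fun w => a i j w.2 * φ w) z)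
    - ∑ j, pdx n j (fun w => b j w.2 * φ w) z) + pdt n φ z

section Aux

variable {n : ℕ} {F G : ℝ × (Fin n → ℝ) → ℝ} {z : ℝ × (Fin n → ℝ)} {j i : Fin n}

lemma hasFDerivAt_slice (z : ℝ × (Fin n → ℝ)) :
    HasFDerivAt (fun y : Fin n → ℝ => ((z.1, y) : ℝ × (Fin n → ℝ)))
      (((0 : (Fin n → ℝ) →L[ℝ] ℝ)).prod (ContinuousLinearMap.id ℝ _)) z.2 :=
  HasFDerivAt.prodMk (hasFDerivAt_const _ _) (hasFDerivAt_id _)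

lemma pdx_eq (hF : DifferentiableAt ℝ F z) :
    pdx n j F z = fderiv ℝ F z (0, Pi.single j 1) := by
  have h := (hF.hasFDerivAt.comp z.2 (hasFDerivAt_slice z)).fderiv
  rw [pdx, show (fun y => F (z.1, y)) = (F ∘ fun y => (z.1, y)) from rfl, h]
  rfl

lemma hasDerivAt_pdt (hF : DifferentiableAt ℝ F z) :
    HasDerivAt (fun s => F (s, z.2)) (pdt n F z) z.1 := by
  have hg : HasDerivAt (fun s : ℝ => ((s, z.2) : ℝ × (Fin n → ℝ))) (1, 0) z.1 :=
    HasDerivAt.prodMk (hasDerivAt_id z.1) (hasDerivAt_const _ _)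
  have h := hF.hasFDerivAt.comp_hasDerivAt z.1 hg
  have : pdt n F z = fderiv ℝ F z (1, 0) := h.deriv
  rw [this]; exact h

lemma pdt_eq (hF : DifferentiableAt ℝ F z) :
    pdt n F z = fderiv ℝ F z (1, 0) :=
  ((hF.hasFDerivAt.comp_hasDerivAt z.1
    (HasDerivAt.prodMk (hasDerivAt_id z.1) (hasDerivAt_const _ _)))).deriv

lemma pdx_eq_zero_of_not_mem (h : z ∉ tsupport F) : pdx n j F z = 0 := by
  have h0 : F =ᶠ[nhds z] 0 := notMem_tsupport_iff_eventuallyEq.1 h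
  have hc : Filter.Tendsto (fun y : Fin n → ℝ => ((z.1, y) : ℝ × (Fin n → ℝ)))
      (nhds z.2) (nhds z) := by
    have : Filter.Tendsto (fun y : Fin n → ℝ => ((z.1, y) : ℝ × (Fin n → ℝ)))
        (nhds z.2) (nhds (z.1, z.2)) :=
      (Continuous.prodMk_right z.1).tendsto z.2
    simpa using this
  have : (fun y => F (z.1, y)) =ᶠ[nhds z.2] (fun _ => 0) := h0.comp_tendsto hc
  rw [pdx, this.fderiv_eq]
  simp

lemma pdt_eq_zero_of_not_mem (h : z ∉ tsupport F) : pdt n F z = 0 := by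
  have h0 : F =ᶠ[nhds z] 0 := notMem_tsupport_iff_eventuallyEq.1 h
  have hc : Filter.Tendsto (fun s : ℝ => ((s, z.2) : ℝ × (Fin n → ℝ)))
      (nhds z.1) (nhds z) := by
    have : Filter.Tendsto (fun s : ℝ => ((s, z.2) : ℝ × (Fin n → ℝ)))
        (nhds z.1) (nhds (z.1, z.2)) :=
      ((continuous_id.prodMk continuous_const)).tendsto z.1
    simpa using this
  have : (fun s => F (s, z.2)) =ᶠ[nhds z.1] (fun _ => 0) := h0.comp_tendsto hc
  rw [pdt, this.deriv_eq]
  simp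

lemma tsupport_pdx_subset : tsupport (pdx n j F) ⊆ tsupport F := by
  apply closure_minimal _ (isClosed_tsupport F)
  intro z hz
  by_contra h
  exact hz (pdx_eq_zero_of_not_mem h)

lemma pdx_contDiff (hF : ContDiff ℝ (⊤ : ℕ∞) F) : ContDiff ℝ (⊤ : ℕ∞) (pdx n j F) := by
  have : pdx n j F = fun z => fderiv ℝ F z (0, Pi.single j 1) :=
    funext fun z => pdx_eq (hF.differentiable (by simp) _)
  rw [this]
  exact (hF.fderiv_right (by simp)).clm_apply contDiff_const

lemma pdt_contDiff (hF : ContDiff ℝ (⊤ : ℕ∞) F) : ContDiff ℝ (⊤ : ℕ∞) (pdt n F) := by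
  have : pdt n F = fun z => fderiv ℝ F z (1, 0) :=
    funext fun z => pdt_eq (hF.differentiable (by simp) _)
  rw [this]
  exact (hF.fderiv_right (by simp)).clm_apply contDiff_const

end Aux

section Aux2

variable {n : ℕ} {F G : ℝ × (Fin n → ℝ) → ℝ} {Ω : Set (ℝ × (Fin n → ℝ))}
  {z : ℝ × (Fin n → ℝ)} {j i : Fin n}

lemma pdx_eqOn (hΩ : IsOpen Ω) (hF : ContDiffOn ℝ (⊤ : ℕ∞) F Ω) :
    ∀ z ∈ Ω, pdx n j F z = fderiv ℝ F z (0, Pi.single j 1) := fun z hz =>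
  pdx_eq (((hF z hz).contDiffAt (hΩ.mem_nhds hz)).differentiableAt (by simp))

lemma pdx_contDiffOn (hΩ : IsOpen Ω) (hF : ContDiffOn ℝ (⊤ : ℕ∞) F Ω) :
    ContDiffOn ℝ (⊤ : ℕ∞) (pdx n j F) Ω := by
  apply ContDiffOn.congr (f := fun z => fderiv ℝ F z (0, Pi.single j 1))
  · exact (hF.fderiv_of_isOpen hΩ (by simp)).clm_apply contDiffOn_const
  · exact pdx_eqOn hΩ hF

lemma pdt_contDiffOn (hΩ : IsOpen Ω) (hF : ContDiffOn ℝ (⊤ : ℕ∞) F Ω) :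
    ContDiffOn ℝ (⊤ : ℕ∞) (pdt n F) Ω := by
  apply ContDiffOn.congr (f := fun z => fderiv ℝ F z (1, 0))
  · exact (hF.fderiv_of_isOpen hΩ (by simp)).clm_apply contDiffOn_const
  · exact fun z hz =>
      pdt_eq (((hF z hz).contDiffAt (hΩ.mem_nhds hz)).differentiableAt (by simp))

lemma pdx_differentiableAt (hΩ : IsOpen Ω) (hF : ContDiffOn ℝ (⊤ : ℕ∞) F Ω) (hz : z ∈ Ω) :
    DifferentiableAt ℝ (pdx n j F) z :=
  (((pdx_contDiffOn hΩ hF) z hz).contDiffAt (hΩ.mem_nhds hz)).differentiableAt (by simp)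

lemma pdx_pdx_symm (hΩ : IsOpen Ω) (hF : ContDiffOn ℝ (⊤ : ℕ∞) F Ω) (hz : z ∈ Ω) :
    pdx n i (pdx n j F) z = pdx n j (pdx n i F) z := by
  have hD : ContDiffOn ℝ (⊤ : ℕ∞) (fderiv ℝ F) Ω := hF.fderiv_of_isOpen hΩ (by simp)
  have hDdiff : DifferentiableAt ℝ (fderiv ℝ F) z :=
    ((hD z hz).contDiffAt (hΩ.mem_nhds hz)).differentiableAt (by simp)
  have hsym : IsSymmSndFDerivAt ℝ F z :=
    ((hF z hz).contDiffAt (hΩ.mem_nhds hz)).isSymmSndFDerivAt (by rw [minSmoothness_of_isRCLikeNormedField]; exact WithTop.coe_le_coe.2 (le_top : (2 : ℕ∞) ≤ ⊤))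
  have key : ∀ v w : ℝ × (Fin n → ℝ),
      fderiv ℝ (fun x => fderiv ℝ F x v) z w = fderiv ℝ (fderiv ℝ F) z w v := by
    intro v w
    have := fderiv_clm_apply hDdiff (differentiableAt_const v)
    rw [this]
    simp
  have main : ∀ (a b : Fin n),
      pdx n a (pdx n b F) z
        = fderiv ℝ (fderiv ℝ F) z (0, Pi.single a 1) (0, Pi.single b 1) := by
    intro a b
    have hpd : DifferentiableAt ℝ (pdx n b F) z := pdx_differentiableAt hΩ hF hz
    rw [pdx_eq hpd]
    have hev : pdx n b F =ᶠ[nhds z] fun x => fderiv ℝ F x (0, Pi.single b 1) := by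
      filter_upwards [hΩ.mem_nhds hz] with w hw
      exact pdx_eqOn hΩ hF w hw
    rw [hev.fderiv_eq]
    exact key _ _
  rw [main i j, main j i, hsym]

end Aux2

section Aux3

variable {n : ℕ} {F G : ℝ × (Fin n → ℝ) → ℝ} {z : ℝ × (Fin n → ℝ)} {j i : Fin n}

lemma diff_slice_x (hF : DifferentiableAt ℝ F z) :
    DifferentiableAt ℝ (fun y => F (z.1, y)) z.2 :=
  (hF.hasFDerivAt.comp z.2 (hasFDerivAt_slice z)).differentiableAt

lemma pdx_mul (hF : DifferentiableAt ℝ F z) (hG : DifferentiableAt ℝ G z) :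
    pdx n j (fun w => F w * G w) z = pdx n j F z * G z + F z * pdx n j G z := by
  have h := fderiv_fun_mul (diff_slice_x hF) (diff_slice_x hG)
  rw [pdx, show (fun y => F (z.1, y) * G (z.1, y))
    = fun y => (fun y' => F (z.1, y')) y * (fun y' => G (z.1, y')) y from rfl] at *
  rw [h]
  simp [pdx]
  ring

lemma pdt_mul (hF : DifferentiableAt ℝ F z) (hG : DifferentiableAt ℝ G z) :
    pdt n (fun w => F w * G w) z = pdt n F z * G z + F z * pdt n G z := by
  have hF' : DifferentiableAt ℝ (fun s => F (s, z.2)) z.1 := (hasDerivAt_pdt hF).differentiableAt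
  have hG' : DifferentiableAt ℝ (fun s => G (s, z.2)) z.1 := (hasDerivAt_pdt hG).differentiableAt
  have h := deriv_fun_mul hF' hG'
  rw [pdt, show (fun s => F (s, z.2) * G (s, z.2))
    = fun s => (fun s' => F (s', z.2)) s * (fun s' => G (s', z.2)) s from rfl, h]
  simp [pdt]

lemma pdx_sub (hF : DifferentiableAt ℝ F z) (hG : DifferentiableAt ℝ G z) :
    pdx n j (fun w => F w - G w) z = pdx n j F z - pdx n j G z := by
  have h := fderiv_fun_sub (diff_slice_x hF) (diff_slice_x hG)
  rw [pdx, show (fun y => F (z.1, y) - G (z.1, y))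
    = fun y => (fun y' => F (z.1, y')) y - (fun y' => G (z.1, y')) y from rfl, h]
  simp [pdx]

lemma pdx_sum {m : Type*} {s : Finset m} {F : m → ℝ × (Fin n → ℝ) → ℝ}
    (hF : ∀ k ∈ s, DifferentiableAt ℝ (F k) z) :
    pdx n j (fun w => ∑ k ∈ s, F k w) z = ∑ k ∈ s, pdx n j (F k) z := by
  have h := fderiv_fun_sum (u := s) (A := fun k => (fun y => F k (z.1, y)))
    (fun k hk => diff_slice_x (hF k hk))
  rw [pdx, show (fun y => ∑ k ∈ s, F k (z.1, y))
    = fun y => ∑ k ∈ s, (fun y' => F k (z.1, y')) y from rfl, h]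
  simp [pdx]

end Aux3

section Aux4

variable {n : ℕ}

lemma integrableOn_aux {f : ℝ × (Fin n → ℝ) → ℝ} {S C K : Set (ℝ × (Fin n → ℝ))}
    (hSm : MeasurableSet S) (hSC : S ⊆ C) (hCcl : IsClosed C)
    (hf : ContinuousOn f C) (hK : IsCompact K) (hfK : ∀ z ∉ K, f z = 0) :
    IntegrableOn f S := by
  obtain ⟨M, hM⟩ := (hK.inter_left hCcl).exists_bound_of_continuousOn
    (hf.mono Set.inter_subset_left)
  have hKm : MeasurableSet K := hK.isClosed.measurableSet
  have h1 : IntegrableOn f (S ∩ K) := by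
    constructor
    · exact aestronglyMeasurable_iff_aemeasurable.2
        ((hf.mono (fun z hz => hSC hz.1)).aemeasurable (hSm.inter hKm))
    · refine HasFiniteIntegral.restrict_of_bounded (C := M)
        ((measure_mono Set.inter_subset_right).trans_lt hK.measure_lt_top) ?_
      refine (ae_restrict_iff' (hSm.inter hKm)).2 (Filter.Eventually.of_forall ?_)
      exact fun z hz => hM z (Set.mem_inter (hSC hz.1) hz.2)
  have h2 : Set.indicator (S ∩ K) f = Set.indicator S f := by
    funext z
    by_cases hzS : z ∈ S
    · by_cases hzK : z ∈ K
      · rw [Set.indicator_of_mem (Set.mem_inter hzS hzK), Set.indicator_of_mem hzS]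
      · rw [Set.indicator_of_notMem (fun h => hzK h.2), Set.indicator_of_mem hzS,
          hfK z hzK]
    · rw [Set.indicator_of_notMem (fun h => hzS h.1), Set.indicator_of_notMem hzS]
  rw [← integrable_indicator_iff hSm, ← h2,
    integrable_indicator_iff (hSm.inter hKm)]
  exact h1

lemma closure_halfspace' :
    closure {z : ℝ × (Fin n → ℝ) | 0 < z.1} = {z : ℝ × (Fin n → ℝ) | 0 ≤ z.1} := by
  apply subset_antisymm
  · exact closure_minimal (fun z hz => (le_of_lt hz : (0:ℝ) ≤ z.1))
      (isClosed_le continuous_const continuous_fst)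
  · intro z hz
    have htend : Filter.Tendsto (fun k : ℕ => ((z.1 + (k + 1 : ℝ)⁻¹, z.2) :
        ℝ × (Fin n → ℝ))) Filter.atTop (nhds z) := by
      have h1 : Filter.Tendsto (fun k : ℕ => z.1 + (k + 1 : ℝ)⁻¹)
          Filter.atTop (nhds z.1) := by
        have h0 := tendsto_one_div_add_atTop_nhds_zero_nat (𝕜 := ℝ)
        simp only [one_div] at h0
        simpa using tendsto_const_nhds.add h0
      simpa using h1.prodMk_nhds (tendsto_const_nhds (x := z.2))
    refine mem_closure_of_tendsto htend (Filter.Eventually.of_forall fun k => ?_)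
    have : (0 : ℝ) < z.1 + (k + 1 : ℝ)⁻¹ :=
      add_pos_of_nonneg_of_pos hz (by positivity)
    exact this

end Aux4
section Div

variable {n : ℕ}

lemma div_identity
    (a : Fin n → Fin n → (Fin n → ℝ) → ℝ) (b : Fin n → (Fin n → ℝ) → ℝ)
    (ha : ∀ i j, ContDiff ℝ (⊤ : ℕ∞) (a i j)) (hb : ∀ j, ContDiff ℝ (⊤ : ℕ∞) (b j))
    (u φ : ℝ × (Fin n → ℝ) → ℝ) {Ω : Set (ℝ × (Fin n → ℝ))} (hΩopen : IsOpen Ω)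
    (hu_smooth : ContDiffOn ℝ (⊤ : ℕ∞) u Ω) (hφ : ContDiff ℝ (⊤ : ℕ∞) φ)
    {z : ℝ × (Fin n → ℝ)} (hz : z ∈ Ω) :
    (∑ i, pdx n i (fun w =>
        (∑ j, u w * pdx n j (fun w' => a i j w'.2 * φ w') w)
        - (∑ j, (a j i w.2 * φ w) * pdx n j u w)
        - (b i w.2 * φ w) * u w) z)
      + pdt n (fun w => u w * φ w) z
      = u z * Lstar n a b φ z - φ z * Lheat n a b u z := by
  have hψ : ∀ i j, ContDiff ℝ (⊤ : ℕ∞) (fun w : ℝ × (Fin n → ℝ) => a i j w.2 * φ w) :=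
    fun i j => ((ha i j).comp contDiff_snd).mul hφ
  have hχ : ∀ i, ContDiff ℝ (⊤ : ℕ∞) (fun w : ℝ × (Fin n → ℝ) => b i w.2 * φ w) :=
    fun i => ((hb i).comp contDiff_snd).mul hφ
  have hUz : DifferentiableAt ℝ u z :=
    ((hu_smooth z hz).contDiffAt (hΩopen.mem_nhds hz)).differentiableAt (by simp)
  have hψd : ∀ (i j : Fin n) (w : ℝ × (Fin n → ℝ)),
      DifferentiableAt ℝ (fun w' => a i j w'.2 * φ w') w :=
    fun i j w => ((hψ i j).differentiable (by simp)) w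
  have hpdψd : ∀ (i j k : Fin n) (w : ℝ × (Fin n → ℝ)),
      DifferentiableAt ℝ (pdx n k (fun w' => a i j w'.2 * φ w')) w :=
    fun i j k w => ((pdx_contDiff (hψ i j)).differentiable (by simp)) w
  have hχd : ∀ (i : Fin n) (w : ℝ × (Fin n → ℝ)),
      DifferentiableAt ℝ (fun w' => b i w'.2 * φ w') w :=
    fun i w => ((hχ i).differentiable (by simp)) w
  have hpdxud : ∀ j : Fin n, DifferentiableAt ℝ (pdx n j u) z :=
    fun j => pdx_differentiableAt hΩopen hu_smooth hz
  -- expansion of each pdx n i (V i) z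
  have hVi : ∀ i : Fin n, pdx n i (fun w =>
        (∑ j, u w * pdx n j (fun w' => a i j w'.2 * φ w') w)
        - (∑ j, (a j i w.2 * φ w) * pdx n j u w)
        - (b i w.2 * φ w) * u w) z
      = ((∑ j, (pdx n i u z * pdx n j (fun w' => a i j w'.2 * φ w') z
            + u z * pdx n i (pdx n j (fun w' => a i j w'.2 * φ w')) z))
        - (∑ j, (pdx n i (fun w' => a j i w'.2 * φ w') z * pdx n j u z
            + (a j i z.2 * φ z) * pdx n i (pdx n j u) z)))
        - (pdx n i (fun w' => b i w'.2 * φ w') z * u z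
            + (b i z.2 * φ z) * pdx n i u z) := by
    intro i
    have d1 : ∀ j : Fin n, DifferentiableAt ℝ
        (fun w => u w * pdx n j (fun w' => a i j w'.2 * φ w') w) z :=
      fun j => hUz.mul (hpdψd i j j z)
    have d2 : ∀ j : Fin n, DifferentiableAt ℝ
        (fun w => (a j i w.2 * φ w) * pdx n j u w) z :=
      fun j => (hψd j i z).mul (hpdxud j)
    have hS1 : DifferentiableAt ℝ
        (fun w => ∑ j, u w * pdx n j (fun w' => a i j w'.2 * φ w') w) z :=
      DifferentiableAt.fun_sum (fun j _ => d1 j)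
    have hS2 : DifferentiableAt ℝ
        (fun w => ∑ j, (a j i w.2 * φ w) * pdx n j u w) z :=
      DifferentiableAt.fun_sum (fun j _ => d2 j)
    have hS3 : DifferentiableAt ℝ (fun w => (b i w.2 * φ w) * u w) z :=
      (hχd i z).mul hUz
    rw [pdx_sub (show DifferentiableAt ℝ (fun w =>
        (∑ j, u w * pdx n j (fun w' => a i j w'.2 * φ w') w)
        - (∑ j, (a j i w.2 * φ w) * pdx n j u w)) z from hS1.sub hS2) hS3, pdx_sub hS1 hS2,
      pdx_sum (fun j _ => d1 j), pdx_sum (fun j _ => d2 j),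
      pdx_mul (hχd i z) hUz]
    congr 2
    · exact Finset.sum_congr rfl fun j _ => pdx_mul hUz (hpdψd i j j z)
    · exact Finset.sum_congr rfl fun j _ => pdx_mul (hψd j i z) (hpdxud j)
  have hpdtm : pdt n (fun w => u w * φ w) z
      = pdt n u z * φ z + u z * pdt n φ z :=
    pdt_mul hUz (hφ.differentiable (by simp) z)
  rw [hpdtm, Finset.sum_congr rfl fun i _ => hVi i]
  -- distribute the sums
  rw [Finset.sum_sub_distrib, Finset.sum_sub_distrib, Finset.sum_add_distrib]
  simp only [Finset.sum_add_distrib, ← Finset.mul_sum, ← Finset.sum_mul]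
  -- swap/cancellation identities
  have hcancel : ∑ i : Fin n,
        pdx n i u z * ∑ j : Fin n, pdx n j (fun w' => a i j w'.2 * φ w') z
      = ∑ i : Fin n, ∑ j : Fin n,
        pdx n i (fun w' => a j i w'.2 * φ w') z * pdx n j u z := by
    rw [Finset.sum_congr rfl fun i (_ : i ∈ Finset.univ) =>
      Finset.mul_sum Finset.univ (fun j => pdx n j (fun w' => a i j w'.2 * φ w') z)
        (pdx n i u z), Finset.sum_comm]
    exact Finset.sum_congr rfl fun i _ => Finset.sum_congr rfl fun j _ => by ring
  have hswap2 : ∑ i : Fin n, ∑ j : Fin n,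
        (a j i z.2 * φ z) * pdx n i (pdx n j u) z
      = φ z * ∑ i : Fin n, ∑ j : Fin n, a i j z.2 * pdx n i (pdx n j u) z := by
    rw [Finset.sum_comm, Finset.mul_sum]
    refine Finset.sum_congr rfl fun i _ => ?_
    rw [Finset.mul_sum]
    refine Finset.sum_congr rfl fun j _ => ?_
    rw [pdx_pdx_symm hΩopen hu_smooth hz]
    ring
  have hpull2 : ∑ i : Fin n, (b i z.2 * φ z) * pdx n i u z
      = φ z * ∑ i : Fin n, b i z.2 * pdx n i u z := by
    rw [Finset.mul_sum]
    exact Finset.sum_congr rfl fun i _ => by ring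
  rw [hcancel, hswap2, hpull2, Lstar, Lheat]
  ring

end Div

section Aux5
variable {n : ℕ}

lemma tsupport_mul_right' {α : Type*} [TopologicalSpace α] (c φ : α → ℝ) :
    tsupport (fun w => c w * φ w) ⊆ tsupport φ := by
  apply closure_minimal _ (isClosed_tsupport φ)
  intro w hw
  apply subset_tsupport φ
  intro h0
  apply hw
  simp only [Function.mem_support, ne_eq, not_not] at *
  rw [h0, mul_zero]

end Aux5

/-- The trivial extension of a solution of the Cauchy problem on `{t > 0}` with zero
initial datum is a weak solution of `Lū = 0` on all of `ℝ^{1+n}`. -/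
theorem trivial_extension_weak_solution
    {n : ℕ}
    -- the coefficients of L₀
    (a : Fin n → Fin n → (Fin n → ℝ) → ℝ) (b : Fin n → (Fin n → ℝ) → ℝ)
    (ha : ∀ i j, ContDiff ℝ (⊤ : ℕ∞) (a i j)) (hb : ∀ j, ContDiff ℝ (⊤ : ℕ∞) (b j))
    -- the solution u of the Cauchy problem on the half space Ω = {t > 0}
    (u : ℝ × (Fin n → ℝ) → ℝ)
    (hu_smooth : ContDiffOn ℝ (⊤ : ℕ∞) u {z : ℝ × (Fin n → ℝ) | 0 < z.1})
    (hu_cont : ContinuousOn u (closure {z : ℝ × (Fin n → ℝ) | 0 < z.1}))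
    (hu_sol : ∀ z ∈ {z : ℝ × (Fin n → ℝ) | 0 < z.1}, Lheat n a b u z = 0)
    (hu_init : ∀ x : Fin n → ℝ, u (0, x) = 0)
    -- the trivial extension ū
    (ubar : ℝ × (Fin n → ℝ) → ℝ)
    (hubar : ∀ z : ℝ × (Fin n → ℝ), ubar z = if 0 ≤ z.1 then u z else 0) :
    ∀ φ : ℝ × (Fin n → ℝ) → ℝ, ContDiff ℝ (⊤ : ℕ∞) φ → HasCompactSupport φ →
      (∫ z, ubar z * Lstar n a b φ z) = 0 := by
  intro φ hφ hφc
  set Ω : Set (ℝ × (Fin n → ℝ)) := {z | 0 < z.1} with hΩdef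
  have hΩopen : IsOpen Ω := isOpen_lt continuous_const continuous_fst
  have hu_cont' : ContinuousOn u {z : ℝ × (Fin n → ℝ) | 0 ≤ z.1} :=
    closure_halfspace' ▸ hu_cont
  have hKc : IsCompact (tsupport φ) := hφc
  have hψ : ∀ i j, ContDiff ℝ (⊤ : ℕ∞) (fun w : ℝ × (Fin n → ℝ) => a i j w.2 * φ w) :=
    fun i j => ((ha i j).comp contDiff_snd).mul hφ
  have hχ : ∀ i, ContDiff ℝ (⊤ : ℕ∞) (fun w : ℝ × (Fin n → ℝ) => b i w.2 * φ w) :=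
    fun i => ((hb i).comp contDiff_snd).mul hφ
  -- the vector field
  set V : Fin n → (ℝ × (Fin n → ℝ)) → ℝ := fun i w =>
      (∑ j, u w * pdx n j (fun w' => a i j w'.2 * φ w') w)
      - (∑ j, (a j i w.2 * φ w) * pdx n j u w)
      - (b i w.2 * φ w) * u w with hVdef
  have hVcd : ∀ i, ContDiffOn ℝ (⊤ : ℕ∞) (V i) Ω := by
    intro i
    refine ContDiffOn.sub (ContDiffOn.sub ?_ ?_) ?_
    · exact ContDiffOn.sum fun j _ =>
        hu_smooth.mul ((pdx_contDiff (hψ i j)).contDiffOn)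
    · exact ContDiffOn.sum fun j _ =>
        ((hψ j i).contDiffOn).mul (pdx_contDiffOn hΩopen hu_smooth)
    · exact ((hχ i).contDiffOn).mul hu_smooth
  have hVzero : ∀ i z, z ∉ tsupport φ → V i z = 0 := by
    intro i z hz
    have h1 : ∀ j : Fin n, pdx n j (fun w' => a i j w'.2 * φ w') z = 0 :=
      fun j => pdx_eq_zero_of_not_mem (fun hm => hz (tsupport_mul_right' _ _ hm))
    have hφz : φ z = 0 := image_eq_zero_of_notMem_tsupport hz
    simp [hVdef, h1, hφz]
  have hpdxVzero : ∀ i z, z ∉ tsupport φ → pdx n i (V i) z = 0 := by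
    intro i z hz
    refine pdx_eq_zero_of_not_mem (fun hm => hz ?_)
    have hsub : tsupport (V i) ⊆ tsupport φ := by
      apply closure_minimal _ (isClosed_tsupport φ)
      intro w hw
      by_contra hcon
      exact hw (hVzero i w hcon)
    exact hsub hm
  have huφcd : ContDiffOn ℝ (⊤ : ℕ∞) (fun w => u w * φ w) Ω := hu_smooth.mul hφ.contDiffOn
  have huφsupp : tsupport (fun w => u w * φ w) ⊆ tsupport φ := tsupport_mul_right' _ _
  have hpdtzero : ∀ z, z ∉ tsupport φ → pdt n (fun w => u w * φ w) z = 0 :=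
    fun z hz => pdt_eq_zero_of_not_mem (fun hm => hz (huφsupp hm))
  -- continuity and support of Lstar φ
  have hLseq : Lstar n a b φ = fun z =>
      ((∑ i, ∑ j, pdx n i (pdx n j fun w => a i j w.2 * φ w) z)
        - ∑ j, pdx n j (fun w => b j w.2 * φ w) z) + pdt n φ z := rfl
  have hLscont : Continuous (Lstar n a b φ) := by
    rw [hLseq]
    exact (Continuous.sub
      (continuous_finset_sum _ fun i _ => continuous_finset_sum _ fun j _ =>
        (pdx_contDiff (pdx_contDiff (hψ i j))).continuous)
      (continuous_finset_sum _ fun j _ => (pdx_contDiff (hχ j)).continuous)).add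
      (pdt_contDiff hφ).continuous
  have hLszero : ∀ z, z ∉ tsupport φ → Lstar n a b φ z = 0 := by
    intro z hz
    rw [hLseq]
    have h1 : ∀ i j : Fin n,
        pdx n i (pdx n j fun w : ℝ × (Fin n → ℝ) => a i j w.2 * φ w) z = 0 :=
      fun i j => pdx_eq_zero_of_not_mem
        (fun hm => hz (tsupport_mul_right' _ _ (tsupport_pdx_subset hm)))
    have h2 : ∀ j : Fin n, pdx n j (fun w : ℝ × (Fin n → ℝ) => b j w.2 * φ w) z = 0 :=
      fun j => pdx_eq_zero_of_not_mem (fun hm => hz (tsupport_mul_right' _ _ hm))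
    have h3 : pdt n φ z = 0 := pdt_eq_zero_of_not_mem hz
    simp [h1, h2, h3]
  -- the half-space computation for each positive time cutoff
  have key : ∀ ε : ℝ, 0 < ε →
      (∫ z in {z : ℝ × (Fin n → ℝ) | ε < z.1}, u z * Lstar n a b φ z)
        = - ∫ x, u (ε, x) * φ (ε, x) := by
    intro ε hε
    have hSm : MeasurableSet {z : ℝ × (Fin n → ℝ) | ε < z.1} :=
      (isOpen_lt continuous_const continuous_fst).measurableSet
    have hSsub : {z : ℝ × (Fin n → ℝ) | ε < z.1} ⊆ {z : ℝ × (Fin n → ℝ) | ε ≤ z.1} :=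
      fun z hz => (le_of_lt hz : ε ≤ z.1)
    have hCsub : {z : ℝ × (Fin n → ℝ) | ε ≤ z.1} ⊆ Ω := fun z hz => lt_of_lt_of_le hε hz
    have hCcl : IsClosed {z : ℝ × (Fin n → ℝ) | ε ≤ z.1} :=
      isClosed_le continuous_const continuous_fst
    obtain ⟨T0, hT0⟩ := (hKc.image continuous_fst).bddAbove
    set T : ℝ := max T0 ε + 1 with hTdef
    have hT1 : ∀ z ∈ tsupport φ, z.1 < T := by
      intro z hz
      have := hT0 (Set.mem_image_of_mem Prod.fst hz)
      calc z.1 ≤ T0 := this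
      _ ≤ max T0 ε := le_max_left _ _
      _ < T := lt_add_one _
    have hT2 : ε < T := lt_of_le_of_lt (le_max_right _ _) (lt_add_one _)
    -- integrability of the pieces
    have hg1i_int : ∀ i, IntegrableOn (pdx n i (V i)) {z : ℝ × (Fin n → ℝ) | ε < z.1} :=
      fun i => integrableOn_aux hSm hSsub hCcl
        (((pdx_contDiffOn hΩopen (hVcd i)).continuousOn).mono hCsub) hKc
        (fun z hz => hpdxVzero i z hz)
    have hg1sum_int : IntegrableOn (fun z => ∑ i, pdx n i (V i) z)
        {z : ℝ × (Fin n → ℝ) | ε < z.1} :=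
      integrable_finset_sum _ (fun i _ => hg1i_int i)
    have hg2_int : IntegrableOn (pdt n (fun w => u w * φ w))
        {z : ℝ × (Fin n → ℝ) | ε < z.1} :=
      integrableOn_aux hSm hSsub hCcl
        (((pdt_contDiffOn hΩopen huφcd).continuousOn).mono hCsub) hKc
        (fun z hz => hpdtzero z hz)
    have hstep1 : (∫ z in {z : ℝ × (Fin n → ℝ) | ε < z.1}, u z * Lstar n a b φ z)
        = ∫ z in {z : ℝ × (Fin n → ℝ) | ε < z.1},
            ((∑ i, pdx n i (V i) z) + pdt n (fun w => u w * φ w) z) := by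
      refine (setIntegral_congr_fun hSm ?_).symm
      intro z hz
      have hzΩ : z ∈ Ω := hCsub (hSsub hz)
      have hid := div_identity a b ha hb u φ hΩopen hu_smooth hφ hzΩ
      simp only [hVdef]
      rw [hid, hu_sol z hzΩ, mul_zero, sub_zero]
    rw [hstep1, integral_add hg1sum_int hg2_int]
    have hprod : {z : ℝ × (Fin n → ℝ) | ε < z.1}
        = Set.Ioi ε ×ˢ (Set.univ : Set (Fin n → ℝ)) := by
      ext z; simp [Set.mem_prod]
    have hzero1 : (∫ z in {z : ℝ × (Fin n → ℝ) | ε < z.1}, ∑ i, pdx n i (V i) z) = 0 := by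
      rw [hprod, Measure.volume_eq_prod]
      have hint : IntegrableOn (fun z => ∑ i, pdx n i (V i) z)
          (Set.Ioi ε ×ˢ (Set.univ : Set (Fin n → ℝ)))
          ((volume : Measure ℝ).prod volume) := by
        rw [← Measure.volume_eq_prod, ← hprod]; exact hg1sum_int
      rw [setIntegral_prod _ hint]
      have hinner : ∀ t ∈ Set.Ioi ε,
          (∫ x in (Set.univ : Set (Fin n → ℝ)), ∑ i, pdx n i (V i) (t, x)) = (0:ℝ) := by
        intro t ht
        rw [setIntegral_univ]
        have htΩ : ∀ x : Fin n → ℝ, ((t, x) : ℝ × (Fin n → ℝ)) ∈ Ω :=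
          fun x => lt_trans hε ht
        have hW'cont : ∀ i : Fin n, Continuous (fun y => pdx n i (V i) (t, y)) :=
          fun i => ((pdx_contDiffOn hΩopen (hVcd i)).continuousOn).comp_continuous
            (Continuous.prodMk_right t) htΩ
        have hW'supp : ∀ i : Fin n, HasCompactSupport (fun y => pdx n i (V i) (t, y)) :=
          fun i => HasCompactSupport.intro (hKc.image continuous_snd)
            (fun y hy => hpdxVzero i (t, y) (fun hm => hy ⟨(t, y), hm, rfl⟩))
        have hW'int : ∀ i : Fin n, Integrable (fun y => pdx n i (V i) (t, y)) :=
          fun i => (hW'cont i).integrable_of_hasCompactSupport (hW'supp i)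
        rw [integral_finset_sum _ (fun i _ => hW'int i)]
        refine Finset.sum_eq_zero fun i _ => ?_
        have hVdAt : ∀ y : Fin n → ℝ, DifferentiableAt ℝ (V i) (t, y) := fun y =>
          (((hVcd i) _ (htΩ y)).contDiffAt (hΩopen.mem_nhds (htΩ y))).differentiableAt (by simp)
        have hWdiff : Differentiable ℝ (fun y => V i (t, y)) :=
          fun y => diff_slice_x (hVdAt y)
        have hWcont : Continuous (fun y => V i (t, y)) :=
          ((hVcd i).continuousOn).comp_continuous (Continuous.prodMk_right t) htΩ
        have hWsupp : HasCompactSupport (fun y => V i (t, y)) :=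
          HasCompactSupport.intro (hKc.image continuous_snd)
            (fun y hy => hVzero i (t, y) (fun hm => hy ⟨(t, y), hm, rfl⟩))
        have hWint : Integrable (fun y => V i (t, y)) :=
          hWcont.integrable_of_hasCompactSupport hWsupp
        have hW'eq : (fun y => pdx n i (V i) (t, y))
            = fun y => fderiv ℝ (fun y' => V i (t, y')) y (Pi.single i 1) := rfl
        have h1 : Integrable (fun x : Fin n → ℝ =>
            fderiv ℝ (fun _ : Fin n → ℝ => (1:ℝ)) x (Pi.single i 1) * V i (t, x)) := by
          have he : (fun x : Fin n → ℝ =>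
              fderiv ℝ (fun _ : Fin n → ℝ => (1:ℝ)) x (Pi.single i 1) * V i (t, x))
              = fun _ => (0:ℝ) := by
            funext x; simp
          rw [he]
          exact integrable_zero _ _ _
        have h2 : Integrable (fun x : Fin n → ℝ =>
            (1:ℝ) * fderiv ℝ (fun y => V i (t, y)) x (Pi.single i 1)) := by
          simp only [one_mul]
          rw [← hW'eq]
          exact hW'int i
        have h3 : Integrable (fun x : Fin n → ℝ => (1:ℝ) * V i (t, x)) := by
          simpa [one_mul] using hWint
        have h := integral_mul_fderiv_eq_neg_fderiv_mul_of_integrable h1 h2 h3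
          (fun x _ => differentiable_const (1:ℝ) x) (fun x _ => hWdiff x)
        rw [hW'eq]
        simpa using h
      rw [setIntegral_congr_fun measurableSet_Ioi hinner]
      simp
    have hsecond : (∫ z in {z : ℝ × (Fin n → ℝ) | ε < z.1},
        pdt n (fun w => u w * φ w) z) = - ∫ x, u (ε, x) * φ (ε, x) := by
      have hind : Integrable ((Set.Ioi ε ×ˢ (Set.univ : Set (Fin n → ℝ))).indicator
          (pdt n (fun w => u w * φ w))) ((volume : Measure ℝ).prod volume) := by
        rw [← Measure.volume_eq_prod, integrable_indicator_iff (hprod ▸ hSm)]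
        exact hprod ▸ hg2_int
      rw [← integral_indicator hSm, hprod, Measure.volume_eq_prod,
        integral_prod_symm ((Set.Ioi ε ×ˢ (Set.univ : Set (Fin n → ℝ))).indicator
          (pdt n (fun w => u w * φ w))) hind]
      have hswap : ∀ x : Fin n → ℝ,
          (∫ t : ℝ, (Set.Ioi ε ×ˢ (Set.univ : Set (Fin n → ℝ))).indicator
            (pdt n (fun w => u w * φ w)) (t, x))
          = ∫ t in Set.Ioi ε, pdt n (fun w => u w * φ w) (t, x) := by
        intro x
        rw [← integral_indicator measurableSet_Ioi]
        congr 1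
        funext t
        by_cases h : t ∈ Set.Ioi ε
        · rw [Set.indicator_of_mem (by simp [h] : ((t, x) : ℝ × (Fin n → ℝ))
            ∈ Set.Ioi ε ×ˢ (Set.univ : Set (Fin n → ℝ))), Set.indicator_of_mem h]
        · rw [Set.indicator_of_notMem (by simp [h] : ((t, x) : ℝ × (Fin n → ℝ))
            ∉ Set.Ioi ε ×ˢ (Set.univ : Set (Fin n → ℝ))), Set.indicator_of_notMem h]
      have hFTC : ∀ x : Fin n → ℝ,
          (∫ t in Set.Ioi ε, pdt n (fun w => u w * φ w) (t, x))
            = -(u (ε, x) * φ (ε, x)) := by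
        intro x
        have hmem : ∀ s : ℝ, ε ≤ s → ((s, x) : ℝ × (Fin n → ℝ)) ∈ Ω :=
          fun s hs => lt_of_lt_of_le hε hs
        have hdiffAt : ∀ s : ℝ, ε ≤ s →
            DifferentiableAt ℝ (fun w => u w * φ w) (s, x) := fun s hs =>
          ((huφcd _ (hmem s hs)).contDiffAt (hΩopen.mem_nhds (hmem s hs))).differentiableAt
            (by simp)
        have hcontOn : ContinuousOn (fun t : ℝ => pdt n (fun w => u w * φ w) (t, x))
            (Set.Icc ε T) := by
          refine ContinuousOn.comp ((pdt_contDiffOn hΩopen huφcd).continuousOn)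
            ((continuous_id.prodMk continuous_const).continuousOn) ?_
          intro t ht
          exact lt_of_lt_of_le hε ht.1
        have hint1 : IntegrableOn (fun t : ℝ => pdt n (fun w => u w * φ w) (t, x))
            (Set.Ioc ε T) :=
          (hcontOn.integrableOn_Icc).mono_set Set.Ioc_subset_Icc_self
        have hzeroIoi : ∀ t ∈ Set.Ioi T, pdt n (fun w => u w * φ w) (t, x) = 0 :=
          fun t ht => hpdtzero (t, x) (fun hm => absurd (hT1 _ hm) (not_lt.2 (le_of_lt ht)))
        have hint2 : IntegrableOn (fun t : ℝ => pdt n (fun w => u w * φ w) (t, x))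
            (Set.Ioi T) := by
          apply IntegrableOn.congr_fun (integrableOn_zero) _ measurableSet_Ioi
          exact fun t ht => (hzeroIoi t ht).symm
        rw [← Set.Ioc_union_Ioi_eq_Ioi hT2.le,
          setIntegral_union (Set.Ioc_disjoint_Ioi le_rfl) measurableSet_Ioi hint1 hint2]
        have hvanish : (∫ t in Set.Ioi T, pdt n (fun w => u w * φ w) (t, x)) = 0 := by
          rw [setIntegral_congr_fun (g := fun _ => (0:ℝ)) measurableSet_Ioi hzeroIoi]
          simp
        have hIoc : (∫ t in Set.Ioc ε T, pdt n (fun w => u w * φ w) (t, x))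
            = u (T, x) * φ (T, x) - u (ε, x) * φ (ε, x) := by
          rw [← intervalIntegral.integral_of_le hT2.le]
          refine intervalIntegral.integral_eq_sub_of_hasDerivAt
            (f := fun t => u (t, x) * φ (t, x)) ?_ ?_
          · intro s hs
            rw [Set.uIcc_of_le hT2.le] at hs
            exact hasDerivAt_pdt (hdiffAt s hs.1)
          · apply ContinuousOn.intervalIntegrable
            rw [Set.uIcc_of_le hT2.le]
            exact hcontOn
        have hφT : φ (T, x) = 0 := image_eq_zero_of_notMem_tsupport
          (fun hm => absurd (hT1 _ hm) (lt_irrefl T))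
        rw [hvanish, hIoc, hφT]
        ring
      have hfin : (fun x : Fin n → ℝ =>
          ∫ t : ℝ, (Set.Ioi ε ×ˢ (Set.univ : Set (Fin n → ℝ))).indicator
            (pdt n (fun w => u w * φ w)) (t, x))
          = fun x => -(u (ε, x) * φ (ε, x)) := by
        funext x
        rw [hswap x, hFTC x]
      rw [hfin, integral_neg]
    rw [hzero1, hsecond, zero_add]
  -- global integrability on the half space
  have h0m : MeasurableSet {z : ℝ × (Fin n → ℝ) | 0 < z.1} :=
    (isOpen_lt continuous_const continuous_fst).measurableSet
  have h0cl : IsClosed {z : ℝ × (Fin n → ℝ) | 0 ≤ z.1} :=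
    isClosed_le continuous_const continuous_fst
  have hGint : IntegrableOn (fun z => u z * Lstar n a b φ z)
      {z : ℝ × (Fin n → ℝ) | 0 < z.1} :=
    integrableOn_aux h0m (fun z hz => (le_of_lt hz : (0:ℝ) ≤ z.1)) h0cl
      (hu_cont'.mul hLscont.continuousOn) hKc
      (fun z hz => by rw [hLszero z hz, mul_zero])
  -- monotone family of sets
  set sfam : ℕ → Set (ℝ × (Fin n → ℝ)) := fun k => {z | ((k : ℝ) + 1)⁻¹ < z.1}
    with hsfam
  have hs_meas : ∀ k, MeasurableSet (sfam k) :=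
    fun k => (isOpen_lt continuous_const continuous_fst).measurableSet
  have hs_mono : Monotone sfam := by
    intro k l hkl z hz
    have hz' : ((k : ℝ) + 1)⁻¹ < z.1 := hz
    have hc : ((l : ℝ) + 1)⁻¹ ≤ ((k : ℝ) + 1)⁻¹ := by
      gcongr
    exact lt_of_le_of_lt hc hz'
  have hs_union : (⋃ k, sfam k) = {z : ℝ × (Fin n → ℝ) | 0 < z.1} := by
    apply subset_antisymm
    · refine Set.iUnion_subset fun k z hz => ?_
      have hz' : ((k : ℝ) + 1)⁻¹ < z.1 := hz
      exact lt_trans (show (0:ℝ) < ((k : ℝ) + 1)⁻¹ by positivity) hz'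
    · intro z hz
      obtain ⟨k, hk⟩ := exists_nat_one_div_lt (show (0:ℝ) < z.1 from hz)
      refine Set.mem_iUnion.2 ⟨k, ?_⟩
      rw [one_div] at hk
      exact hk
  have htend1 : Filter.Tendsto (fun k => ∫ z in sfam k, u z * Lstar n a b φ z)
      Filter.atTop (nhds (∫ z in {z : ℝ × (Fin n → ℝ) | 0 < z.1},
        u z * Lstar n a b φ z)) := by
    have := tendsto_setIntegral_of_monotone hs_meas hs_mono
      (by rw [hs_union]; exact hGint)
    rwa [hs_union] at this
  -- the boundary integrals tend to 0
  have hK2c : IsCompact (Prod.snd '' tsupport φ) := hKc.image continuous_snd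
  obtain ⟨M, hM⟩ := (hKc.inter_right h0cl).exists_bound_of_continuousOn
    ((hu_cont'.mono Set.inter_subset_right).mul (hφ.continuous.continuousOn))
  set M' : ℝ := max M 0 with hM'def
  have htend2 : Filter.Tendsto
      (fun k : ℕ => ∫ x, u (((k : ℝ) + 1)⁻¹, x) * φ (((k : ℝ) + 1)⁻¹, x))
      Filter.atTop (nhds 0) := by
    have hbdd_int : Integrable ((Prod.snd '' tsupport φ).indicator
        (fun _ => M')) := by
      rw [integrable_indicator_iff hK2c.measurableSet]
      exact integrableOn_const hK2c.measure_lt_top.ne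
    have hεk : ∀ k : ℕ, (0:ℝ) < ((k : ℝ) + 1)⁻¹ := fun k => by positivity
    have hmeasF : ∀ k : ℕ, AEStronglyMeasurable
        (fun x => u (((k : ℝ) + 1)⁻¹, x) * φ (((k : ℝ) + 1)⁻¹, x)) volume := by
      intro k
      refine Continuous.aestronglyMeasurable (Continuous.mul ?_ ?_)
      · exact hu_cont'.comp_continuous (Continuous.prodMk_right _)
          (fun x => le_of_lt (hεk k))
      · exact hφ.continuous.comp (Continuous.prodMk_right _)
    have hboundF : ∀ k : ℕ, ∀ᵐ x : Fin n → ℝ,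
        ‖u (((k : ℝ) + 1)⁻¹, x) * φ (((k : ℝ) + 1)⁻¹, x)‖
          ≤ (Prod.snd '' tsupport φ).indicator (fun _ => M') x := by
      intro k
      refine Filter.Eventually.of_forall fun x => ?_
      by_cases hm : ((((k : ℝ) + 1)⁻¹, x) : ℝ × (Fin n → ℝ)) ∈ tsupport φ
      · have hx2 : x ∈ Prod.snd '' tsupport φ := ⟨_, hm, rfl⟩
        rw [Set.indicator_of_mem hx2]
        refine le_trans (hM _ (Set.mem_inter hm (le_of_lt (hεk k)))) (le_max_left _ _)
      · have hφ0 : φ ((((k : ℝ) + 1)⁻¹, x) : ℝ × (Fin n → ℝ)) = 0 :=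
          image_eq_zero_of_notMem_tsupport hm
        rw [hφ0, mul_zero, norm_zero]
        exact Set.indicator_nonneg (fun _ _ => le_max_right _ _) x
    have hlimF : ∀ᵐ x : Fin n → ℝ, Filter.Tendsto
        (fun k : ℕ => u (((k : ℝ) + 1)⁻¹, x) * φ (((k : ℝ) + 1)⁻¹, x))
        Filter.atTop (nhds 0) := by
      refine Filter.Eventually.of_forall fun x => ?_
      have hseq : Filter.Tendsto (fun k : ℕ => ((((k : ℝ) + 1)⁻¹, x) : ℝ × (Fin n → ℝ)))
          Filter.atTop (nhds ((0 : ℝ), x)) := by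
        have h0 := tendsto_one_div_add_atTop_nhds_zero_nat (𝕜 := ℝ)
        simp only [one_div] at h0
        exact h0.prodMk_nhds tendsto_const_nhds
      have hseq' : Filter.Tendsto (fun k : ℕ => ((((k : ℝ) + 1)⁻¹, x) : ℝ × (Fin n → ℝ)))
          Filter.atTop (nhdsWithin ((0 : ℝ), x) {z : ℝ × (Fin n → ℝ) | 0 ≤ z.1}) := by
        refine tendsto_nhdsWithin_iff.2 ⟨hseq, Filter.Eventually.of_forall fun k => ?_⟩
        exact le_of_lt (hεk k)
      have hu_tend : Filter.Tendsto (fun k : ℕ => u (((k : ℝ) + 1)⁻¹, x))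
          Filter.atTop (nhds (u ((0:ℝ), x))) :=
        (hu_cont' ((0:ℝ), x) (le_refl (0:ℝ))).tendsto.comp hseq'
      have hφ_tend : Filter.Tendsto (fun k : ℕ => φ (((k : ℝ) + 1)⁻¹, x))
          Filter.atTop (nhds (φ ((0:ℝ), x))) :=
        (hφ.continuous.tendsto _).comp hseq
      have := hu_tend.mul hφ_tend
      rw [hu_init x, zero_mul] at this
      exact this
    have := tendsto_integral_of_dominated_convergence _ hmeasF hbdd_int hboundF hlimF
    simpa using this
  -- identify the limits
  have hI0 : (∫ z in {z : ℝ × (Fin n → ℝ) | 0 < z.1}, u z * Lstar n a b φ z) = 0 := by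
    have hJk : ∀ k : ℕ, (∫ z in sfam k, u z * Lstar n a b φ z)
        = - ∫ x, u (((k : ℝ) + 1)⁻¹, x) * φ (((k : ℝ) + 1)⁻¹, x) :=
      fun k => key _ (by positivity)
    have htend3 : Filter.Tendsto (fun k => ∫ z in sfam k, u z * Lstar n a b φ z)
        Filter.atTop (nhds 0) := by
      have h := htend2.neg
      rw [neg_zero] at h
      exact h.congr fun k => (hJk k).symm
    exact tendsto_nhds_unique htend1 htend3
  -- conclude
  have hre : (fun z => ubar z * Lstar n a b φ z)
      = Set.indicator {z : ℝ × (Fin n → ℝ) | 0 ≤ z.1}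
        (fun z => u z * Lstar n a b φ z) := by
    funext z
    rw [hubar z]
    by_cases h : (0:ℝ) ≤ z.1
    · rw [if_pos h,
        Set.indicator_of_mem (show z ∈ {w : ℝ × (Fin n → ℝ) | 0 ≤ w.1} from h)]
    · rw [if_neg h, zero_mul,
        Set.indicator_of_notMem (show z ∉ {w : ℝ × (Fin n → ℝ) | 0 ≤ w.1} from h)]
  have h0le_m : MeasurableSet {z : ℝ × (Fin n → ℝ) | 0 ≤ z.1} := h0cl.measurableSet
  have haeeq : {z : ℝ × (Fin n → ℝ) | 0 ≤ z.1} =ᵐ[volume]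
      {z : ℝ × (Fin n → ℝ) | 0 < z.1} := by
    have hnull : (volume : Measure (ℝ × (Fin n → ℝ))) {z | z.1 = 0} = 0 := by
      have hset : {z : ℝ × (Fin n → ℝ) | z.1 = 0}
          = ({0} : Set ℝ) ×ˢ (Set.univ : Set (Fin n → ℝ)) := by
        ext z
        constructor
        · intro h
          exact Set.mem_prod.2 ⟨h, trivial⟩
        · intro h
          exact (Set.mem_prod.1 h).1
      rw [hset, Measure.volume_eq_prod, Measure.prod_prod]
      simp
    rw [Filter.eventuallyEq_set]
    filter_upwards [MeasureTheory.compl_mem_ae_iff.2 hnull] with z hz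
    have hz' : z.1 ≠ 0 := hz
    exact ⟨fun h => lt_of_le_of_ne h (Ne.symm hz'), fun h => le_of_lt h⟩
  rw [hre, integral_indicator h0le_m, setIntegral_congr_set haeeq, hI0]
end

section
/- Let A, B be constant real n×n matrices with A symmetric positive semidefinite, and let L = div(A∇) + ⟨Bx,∇⟩ − ∂_t = Σ_{i,j=1}^n A_{ij} ∂²/∂x_i∂x_j + Σ_{i,j=1}^n B_{ij}x_j ∂/∂x_i − ∂/∂t on ℝ^{n+1} = ℝⁿ_x × ℝ_t. Then L is left-invariant with respect to the group law (x,t)·(x',t') = (x' + E(t')x, t + t') with E(s) = exp(−sB): for every smooth u : ℝ^{n+1} → ℝ and every (x₀,t₀) ∈ ℝ^{n+1}, L(u ∘ τ_{(x₀,t₀)}) = (Lu) ∘ τ_{(x₀,t₀)}, where τ_{(x₀,t₀)}(x,t) := (x₀,t₀)·(x,t). -/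
/-- `E(s) = exp(-sB)`, the matrix exponential. -/
noncomputable def Emat (n : ℕ) (B : Matrix (Fin n) (Fin n) ℝ) (s : ℝ) :
    Matrix (Fin n) (Fin n) ℝ :=
  NormedSpace.exp ((-s) • B)

/-- The composition law `(x,t)·(x',t') = (x' + E(t')x, t + t')` on `ℝⁿ × ℝ`. -/
noncomputable def mulK (n : ℕ) (B : Matrix (Fin n) (Fin n) ℝ)
    (p q : (Fin n → ℝ) × ℝ) : (Fin n → ℝ) × ℝ :=
  (q.1 + (Emat n B q.2).mulVec p.1, p.2 + q.2)

/-- Partial derivative in the `x_j` variable of a function on `ℝ^{n+1} = ℝⁿ_x × ℝ_t`. -/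
noncomputable def pdxK (n : ℕ) (j : Fin n) (u : (Fin n → ℝ) × ℝ → ℝ)
    (z : (Fin n → ℝ) × ℝ) : ℝ :=
  fderiv ℝ (fun y => u (y, z.2)) z.1 (Pi.single j 1)

/-- Partial derivative in the `t` variable of a function on `ℝ^{n+1} = ℝⁿ_x × ℝ_t`. -/
noncomputable def pdtK (n : ℕ) (u : (Fin n → ℝ) × ℝ → ℝ) (z : (Fin n → ℝ) × ℝ) : ℝ :=
  deriv (fun s => u (z.1, s)) z.2

/-- The Kolmogorov-type operator
`L = div(A∇) + ⟨Bx,∇⟩ - ∂_t = Σ A_{ij} ∂²/∂x_i∂x_j + Σ B_{ij} x_j ∂/∂x_i - ∂/∂t`. -/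
noncomputable def Lkolm (n : ℕ) (A B : Matrix (Fin n) (Fin n) ℝ)
    (u : (Fin n → ℝ) × ℝ → ℝ) (z : (Fin n → ℝ) × ℝ) : ℝ :=
  ((∑ i, ∑ j, A i j * pdxK n i (pdxK n j u) z) + ∑ i, ∑ j, B i j * z.1 j * pdxK n i u z)
    - pdtK n u z


section MatrixExpAux
attribute [local instance] Matrix.linftyOpNormedRing Matrix.linftyOpNormedAlgebra

lemma hasDerivAt_Emat (n : ℕ) (B : Matrix (Fin n) (Fin n) ℝ) (s : ℝ) :
    HasDerivAt (Emat n B) ((-B) * Emat n B s) s := by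
  have he : Emat n B = fun t : ℝ => NormedSpace.exp (t • (-B)) := by
    funext t; rw [Emat, smul_neg, neg_smul]
  rw [he]
  exact hasDerivAt_exp_smul_const' (𝕂 := ℝ) (-B) s

noncomputable def mulVecCLM (n : ℕ) (v : Fin n → ℝ) :
    Matrix (Fin n) (Fin n) ℝ →L[ℝ] (Fin n → ℝ) :=
  LinearMap.toContinuousLinearMap
    { toFun := fun M => M.mulVec v
      map_add' := fun M N => Matrix.add_mulVec M N v
      map_smul' := fun r M => by simp [Matrix.smul_mulVec] }

lemma hasDerivAt_Emat_mulVec (n : ℕ) (B : Matrix (Fin n) (Fin n) ℝ) (v : Fin n → ℝ) (s : ℝ) :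
    HasDerivAt (fun t => (Emat n B t).mulVec v) (((-B) * Emat n B s).mulVec v) s :=
  (mulVecCLM n v).hasFDerivAt.comp_hasDerivAt s (hasDerivAt_Emat n B s)
end MatrixExpAux

lemma pdxK_eq {n : ℕ} (u : (Fin n → ℝ) × ℝ → ℝ) (hu : Differentiable ℝ u)
    (j : Fin n) (z : (Fin n → ℝ) × ℝ) :
    pdxK n j u z = fderiv ℝ u z (Pi.single j 1, 0) := by
  have h1 : HasFDerivAt (fun y : Fin n → ℝ => (y, z.2))
      ((ContinuousLinearMap.id ℝ (Fin n → ℝ)).prod 0) z.1 :=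
    (hasFDerivAt_id z.1).prodMk (hasFDerivAt_const z.2 z.1)
  have h2 : HasFDerivAt (fun y : Fin n → ℝ => u (y, z.2))
      ((fderiv ℝ u z).comp ((ContinuousLinearMap.id ℝ (Fin n → ℝ)).prod 0)) z.1 :=
    ((hu z).hasFDerivAt).comp z.1 h1
  rw [pdxK, h2.fderiv]
  rfl

lemma pdtK_eq {n : ℕ} (u : (Fin n → ℝ) × ℝ → ℝ) (hu : Differentiable ℝ u)
    (z : (Fin n → ℝ) × ℝ) :
    pdtK n u z = fderiv ℝ u z (0, 1) := by
  have hg : HasDerivAt (fun s : ℝ => ((z.1 : Fin n → ℝ), s)) ((0 : Fin n → ℝ), (1 : ℝ)) z.2 :=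
    (hasDerivAt_const z.2 z.1).prodMk (hasDerivAt_id z.2)
  exact ((hu z).hasFDerivAt.comp_hasDerivAt z.2 hg).deriv

lemma contDiff_pdxK {n : ℕ} {u : (Fin n → ℝ) × ℝ → ℝ} (hu : ContDiff ℝ (⊤ : ℕ∞) u) (j : Fin n) :
    ContDiff ℝ (⊤ : ℕ∞) (pdxK n j u) := by
  have h : pdxK n j u = fun z => fderiv ℝ u z (Pi.single j 1, 0) :=
    funext (pdxK_eq u (hu.differentiable (by simp)) j)
  rw [h]
  exact (hu.fderiv_right (by simp)).clm_apply contDiff_const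

lemma pdxK_shift {n : ℕ} (u : (Fin n → ℝ) × ℝ → ℝ) (hu : Differentiable ℝ u)
    (j : Fin n) (a : ℝ → Fin n → ℝ) (b : ℝ) (z : (Fin n → ℝ) × ℝ) :
    pdxK n j (fun w => u (w.1 + a w.2, b + w.2)) z = pdxK n j u (z.1 + a z.2, b + z.2) := by
  have hf : HasFDerivAt (fun y : Fin n → ℝ => u (y, b + z.2))
      (fderiv ℝ (fun y : Fin n → ℝ => u (y, b + z.2)) (z.1 + a z.2)) (z.1 + a z.2) := by
    apply DifferentiableAt.hasFDerivAt
    exact (hu _).comp _ (differentiableAt_id.prodMk (differentiableAt_const _))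
  have ht : HasFDerivAt (fun y : Fin n → ℝ => y + a z.2)
      (ContinuousLinearMap.id ℝ (Fin n → ℝ)) z.1 := (hasFDerivAt_id z.1).add_const _
  have h2 : HasFDerivAt (fun y : Fin n → ℝ => u (y + a z.2, b + z.2))
      (fderiv ℝ (fun y : Fin n → ℝ => u (y, b + z.2)) (z.1 + a z.2)) z.1 := by
    simpa [Function.comp_def, ContinuousLinearMap.comp_id] using hf.comp z.1 ht
  show fderiv ℝ (fun y : Fin n → ℝ => u (y + a z.2, b + z.2)) z.1 (Pi.single j 1)
      = fderiv ℝ (fun y : Fin n → ℝ => u (y, b + z.2)) (z.1 + a z.2) (Pi.single j 1)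
  rw [h2.fderiv]


/-- The Kolmogorov-type operator `L` is left-invariant with respect to the group law
`(x,t)·(x',t') = (x' + E(t')x, t + t')`, `E(s) = exp(-sB)`. -/
theorem Lkolm_left_invariant
    (n : ℕ) (A B : Matrix (Fin n) (Fin n) ℝ)
    (hAsym : A.IsSymm)
    (hApsd : ∀ ξ : Fin n → ℝ, 0 ≤ ∑ i, ∑ j, A i j * ξ i * ξ j)
    (u : (Fin n → ℝ) × ℝ → ℝ) (hu : ContDiff ℝ (⊤ : ℕ∞) u) (g z : (Fin n → ℝ) × ℝ) :
    Lkolm n A B (fun w => u (mulK n B g w)) z = Lkolm n A B u (mulK n B g z) := by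
  have hud : Differentiable ℝ u := hu.differentiable (by simp)
  have hx : ∀ (j : Fin n) (z' : (Fin n → ℝ) × ℝ),
      pdxK n j (fun w' => u (mulK n B g w')) z' = pdxK n j u (mulK n B g z') := by
    intro j z'
    exact pdxK_shift u hud j (fun s => (Emat n B s).mulVec g.1) g.2 z'
  have hxx : ∀ (i j : Fin n),
      pdxK n i (pdxK n j (fun w' => u (mulK n B g w'))) z
        = pdxK n i (pdxK n j u) (mulK n B g z) := by
    intro i j
    have hj : pdxK n j (fun w' => u (mulK n B g w')) = fun w' => pdxK n j u (mulK n B g w') :=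
      funext (hx j)
    rw [hj]
    exact pdxK_shift (pdxK n j u) ((contDiff_pdxK hu j).differentiable (by simp)) i
      (fun s => (Emat n B s).mulVec g.1) g.2 z
  have hEg : HasDerivAt (fun s => (Emat n B s).mulVec g.1)
      (((-B) * Emat n B z.2).mulVec g.1) z.2 := hasDerivAt_Emat_mulVec n B g.1 z.2
  have hgam : HasDerivAt (fun s : ℝ => (z.1 + (Emat n B s).mulVec g.1, g.2 + s))
      ((((-B) * Emat n B z.2).mulVec g.1 : Fin n → ℝ), (1 : ℝ)) z.2 :=
    (hEg.const_add z.1).prodMk ((hasDerivAt_id z.2).const_add g.2)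
  have hdt : pdtK n (fun w' => u (mulK n B g w')) z
      = fderiv ℝ u (mulK n B g z) ((((-B) * Emat n B z.2).mulVec g.1 : Fin n → ℝ), (1 : ℝ)) :=
    ((hud (mulK n B g z)).hasFDerivAt.comp_hasDerivAt z.2 hgam).deriv
  have hsplit : fderiv ℝ u (mulK n B g z) ((((-B) * Emat n B z.2).mulVec g.1 : Fin n → ℝ), (1:ℝ))
      = fderiv ℝ u (mulK n B g z) (0, 1)
        + ∑ i, (((-B) * Emat n B z.2).mulVec g.1) i * pdxK n i u (mulK n B g z) := by
    have h1 : (((((-B) * Emat n B z.2).mulVec g.1 : Fin n → ℝ), (1:ℝ)) : (Fin n → ℝ) × ℝ)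
        = (0, 1) + ((((-B) * Emat n B z.2).mulVec g.1 : Fin n → ℝ), (0:ℝ)) := by
      simp [Prod.ext_iff]
    rw [h1, map_add]
    congr 1
    have h2 : ((((-B) * Emat n B z.2).mulVec g.1 : Fin n → ℝ), (0:ℝ))
        = ∑ i, (((-B) * Emat n B z.2).mulVec g.1) i • ((Pi.single i 1 : Fin n → ℝ), (0:ℝ)) := by
      apply Prod.ext
      · simp only [Prod.fst_sum, Prod.smul_mk]
        funext k
        simp [Pi.single_apply, Finset.sum_ite_eq', mul_comm]
      · simp [Prod.snd_sum]
    rw [h2, map_sum]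
    refine Finset.sum_congr rfl fun i _ => ?_
    rw [map_smul, smul_eq_mul, ← pdxK_eq u hud i (mulK n B g z)]
  have hc : ∀ i, (((-B) * Emat n B z.2).mulVec g.1) i
      = -(B.mulVec ((Emat n B z.2).mulVec g.1) i) := by
    intro i
    rw [neg_mul, Matrix.neg_mulVec, Matrix.mulVec_mulVec]
    simp
  have hmove : ∑ i, ∑ j, B i j * (mulK n B g z).1 j * pdxK n i u (mulK n B g z)
      = (∑ i, ∑ j, B i j * z.1 j * pdxK n i u (mulK n B g z))
        + ∑ i, (B.mulVec ((Emat n B z.2).mulVec g.1)) i * pdxK n i u (mulK n B g z) := by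
    rw [← Finset.sum_add_distrib]
    refine Finset.sum_congr rfl fun i _ => ?_
    have h1 : (mulK n B g z).1 = z.1 + (Emat n B z.2).mulVec g.1 := rfl
    rw [h1]
    simp only [Pi.add_apply, mul_add, add_mul, Finset.sum_add_distrib,
      Matrix.mulVec, dotProduct, Finset.sum_mul]
  have hCD : ∑ i, (((-B) * Emat n B z.2).mulVec g.1) i * pdxK n i u (mulK n B g z)
      = -∑ i, (B.mulVec ((Emat n B z.2).mulVec g.1)) i * pdxK n i u (mulK n B g z) := by
    rw [← Finset.sum_neg_distrib]
    exact Finset.sum_congr rfl fun i _ => by rw [hc i, neg_mul]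
  simp only [Lkolm, hxx, hx, hdt, pdtK_eq u hud (mulK n B g z), hsplit, hmove, hCD]
  ring
end
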